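/- arXiv:1509.03084 — 13 statements merged into one kernel-verified Lean document; each statement's English description precedes it below -/
import Mathlib

section
/- Let N ≥ 2, let Ω ⊆ ℝ² be open with coordinates (x,t), and let a⁰,…,a^{N-1} : Ω → ℝ be differentiable, with the convention a^N ≡ 1. Define λ(q,x,t) = (1+q²)^{-N/2}·(q^N + Σ_{k=0}^{N-1} a^k(x,t) q^k). Then λ satisfies the Liouville-type equation ∂_t λ = a^{N-1}·q·∂_x λ + (1+q²)·(∂_q λ)·∂_x a^{N-1} for all q ∈ ℝ and all (x,t) ∈ Ω if and only if the functions a^k satisfy the hydrodynamic type system (A): ∂_t a⁰ = a¹·∂_x a^{N-1} and, for k = 1,…,N-1, ∂_t a^k = a^{N-1}·∂_x a^{k-1} + [(k+1)a^{k+1} − (N+1−k)a^{k-1}]·∂_x a^{N-1}. -/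
/-! Write `λ(q) = (1 + q²) ^ (-N/2) P(q)` with `P = q^N + Σ a^k q^k`. Both sides of the Liouville
equation are then `(1 + q²) ^ (-N/2)` times a polynomial in `q`: `∂ₜP` on the left and
`a^{N-1} q ∂ₓP + ∂ₓa^{N-1} ((1 + q²) P' - N q P)` on the right. So the equation holds for all `q`
iff these polynomials agree, and comparing the coefficients of `q^0, …, q^{N-1}` gives exactly
system (A), while the coefficients of higher degree agree automatically. -/

/-- Partial derivative in the `x` direction (first coordinate). -/
noncomputable def pdx (f : ℝ × ℝ → ℝ) (z : ℝ × ℝ) : ℝ := fderiv ℝ f z (1, 0)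

/-- Partial derivative in the `t` direction (second coordinate). -/
noncomputable def pdt (f : ℝ × ℝ → ℝ) (z : ℝ × ℝ) : ℝ := fderiv ℝ f z (0, 1)

/-- System (A): the `N`-component hydrodynamic type system for the coefficients
`a⁰, …, a^{N-1}` of a degree-`N` polynomial first integral (with `a^N ≡ 1`). -/
def SystemA (N : ℕ) (Ω : Set (ℝ × ℝ)) (a : ℕ → ℝ × ℝ → ℝ) : Prop :=
  ∀ z ∈ Ω,
    pdt (a 0) z = a 1 z * pdx (a (N - 1)) z ∧
    ∀ k, 1 ≤ k → k ≤ N - 1 →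
      pdt (a k) z =
        a (N - 1) z * pdx (a (k - 1)) z +
          (((k : ℝ) + 1) * a (k + 1) z - ((N : ℝ) + 1 - (k : ℝ)) * a (k - 1) z) *
            pdx (a (N - 1)) z

/-- The Riemann surface function `λ(q, a) = (1+q²)^{-N/2}(q^N + Σ_{k<N} a^k q^k)`. -/
noncomputable def lam (N : ℕ) (a : ℕ → ℝ × ℝ → ℝ) (q : ℝ) (z : ℝ × ℝ) : ℝ :=
  (1 + q ^ 2) ^ (-(N : ℝ) / 2) * (q ^ N + ∑ k ∈ Finset.range N, a k z * q ^ k)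

open Polynomial Finset

section Algebra

variable {R : Type*} [CommRing R]

noncomputable def polyOfCoeffs (c : ℕ → R) (n : ℕ) : R[X] :=
  ∑ k ∈ range n, C (c k) * X ^ k

lemma coeff_polyOfCoeffs (c : ℕ → R) (n m : ℕ) :
    (polyOfCoeffs c n).coeff m = if m < n then c m else 0 := by
  simp [polyOfCoeffs]

lemma eval_polyOfCoeffs (c : ℕ → R) (n : ℕ) (q : R) :
    (polyOfCoeffs c n).eval q = ∑ k ∈ range n, c k * q ^ k := by
  simp [polyOfCoeffs, eval_finsetSum]

/-- Over `ℝ`, `liouvilleDeriv n p = (1 + q²) ^ (n / 2 + 1) * d/dq ((1 + q²) ^ (-n / 2) * p(q))`. -/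
noncomputable def liouvilleDeriv (n : ℕ) (p : R[X]) : R[X] :=
  (1 + X ^ 2) * derivative p - C (n : R) * X * p

lemma coeff_C_mul_X_mul_zero (α : R) (p : R[X]) : (C α * X * p).coeff 0 = 0 := by
  rw [mul_assoc, coeff_C_mul, coeff_X_mul_zero, mul_zero]

lemma coeff_C_mul_X_mul_succ (α : R) (p : R[X]) (m : ℕ) :
    (C α * X * p).coeff (m + 1) = α * p.coeff m := by
  rw [mul_assoc, coeff_C_mul, coeff_X_mul]

lemma coeff_liouvilleDeriv_zero (n : ℕ) (p : R[X]) :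
    (liouvilleDeriv n p).coeff 0 = p.coeff 1 := by
  simp [liouvilleDeriv, add_mul, coeff_derivative]

lemma coeff_liouvilleDeriv_succ (n : ℕ) (p : R[X]) (m : ℕ) :
    (liouvilleDeriv n p).coeff (m + 1) = (m + 2) * p.coeff (m + 2) + (m - n) * p.coeff m := by
  have hX2 : (X ^ 2 * derivative p).coeff (m + 1) = m * p.coeff m := by
    rcases m with _ | m
    · simp [coeff_X_pow_mul']
    · rw [pow_two, mul_assoc, coeff_X_mul, coeff_X_mul, coeff_derivative]
      push_cast; ring
  rw [liouvilleDeriv, coeff_sub, add_mul, one_mul, coeff_add, hX2, coeff_derivative,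
    coeff_C_mul_X_mul_succ]
  push_cast; ring

/-- `(1 + q²) ^ (-N / 2)` times this polynomial is the right-hand side of the Liouville equation
when `c k = a^k` and `u k = ∂ₓ a^k` at the point considered. -/
noncomputable def liouvilleRHS (N : ℕ) (c u : ℕ → R) : R[X] :=
  C (c (N - 1)) * X * polyOfCoeffs u N + C (u (N - 1)) * liouvilleDeriv N (polyOfCoeffs c (N + 1))

lemma coeff_liouvilleRHS_zero {N : ℕ} (hN : 1 ≤ N) (c u : ℕ → R) :
    (liouvilleRHS N c u).coeff 0 = c 1 * u (N - 1) := by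
  rw [liouvilleRHS, coeff_add, coeff_C_mul, coeff_C_mul_X_mul_zero, coeff_liouvilleDeriv_zero,
    coeff_polyOfCoeffs, if_pos (by omega), zero_add, mul_comm]

lemma coeff_liouvilleRHS_succ (N : ℕ) (c u : ℕ → R) (m : ℕ) :
    (liouvilleRHS N c u).coeff (m + 1) =
      c (N - 1) * (if m < N then u m else 0) +
        u (N - 1) * ((m + 2) * (if m + 2 < N + 1 then c (m + 2) else 0) +
          (m - N) * (if m < N + 1 then c m else 0)) := by
  rw [liouvilleRHS, coeff_add, coeff_C_mul, coeff_C_mul_X_mul_succ, coeff_liouvilleDeriv_succ]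
  simp only [coeff_polyOfCoeffs]

/-- The relations of system (A) at one point, between the values `c k = a^k`, the
`x`-derivatives `u k = ∂ₓ a^k` and the `t`-derivatives `v k = ∂ₜ a^k`. -/
def SystemARelations (N : ℕ) (c u v : ℕ → R) : Prop :=
  v 0 = c 1 * u (N - 1) ∧
    ∀ k, 1 ≤ k → k ≤ N - 1 →
      v k = c (N - 1) * u (k - 1) +
        (((k : R) + 1) * c (k + 1) - ((N : R) + 1 - (k : R)) * c (k - 1)) * u (N - 1)

theorem polyOfCoeffs_eq_liouvilleRHS_iff {N : ℕ} (hN : 1 ≤ N) (c u v : ℕ → R) :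
    polyOfCoeffs v N = liouvilleRHS N c u ↔ SystemARelations N c u v := by
  rw [Polynomial.ext_iff, ← Nat.and_forall_add_one, SystemARelations, coeff_liouvilleRHS_zero hN,
    coeff_polyOfCoeffs, if_pos (by omega)]
  simp only [coeff_liouvilleRHS_succ, coeff_polyOfCoeffs]
  refine and_congr Iff.rfl ⟨fun h k hk1 hk2 => ?_, fun h m => ?_⟩
  · obtain ⟨m, rfl⟩ : ∃ m, k = m + 1 := ⟨k - 1, by omega⟩
    have := h m
    simp only [if_pos (by omega : m + 1 < N), if_pos (by omega : m < N),
      if_pos (by omega : m + 2 < N + 1), if_pos (by omega : m < N + 1)] at this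
    rw [this, Nat.add_sub_cancel]
    push_cast; ring
  · -- in degrees `N` and above both sides vanish identically
    rcases lt_trichotomy (m + 1) N with hm | rfl | hm
    · have := h (m + 1) (by omega) (by omega)
      simp only [if_pos hm, if_pos (by omega : m < N),
        if_pos (by omega : m + 2 < N + 1), if_pos (by omega : m < N + 1), this, Nat.add_sub_cancel]
      push_cast; ring
    · simp only [lt_irrefl, if_false, if_pos (lt_add_one m), if_pos (by omega : m < m + 1 + 1),
        Nat.add_sub_cancel]
      push_cast; ring
    · have hvanish : ((m : R) - N) * (if m < N + 1 then c m else 0) = 0 := by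
        split_ifs
        · rw [show m = N by omega, sub_self, zero_mul]
        · rw [mul_zero]
      simp only [if_neg (by omega : ¬ m + 1 < N), if_neg (by omega : ¬ m < N),
        if_neg (by omega : ¬ m + 2 < N + 1), hvanish]
      ring

end Algebra

lemma hasDerivAt_one_add_sq_rpow_mul_eval (n : ℕ) (p : ℝ[X]) (q : ℝ) :
    HasDerivAt (fun q => (1 + q ^ 2) ^ (-(n : ℝ) / 2) * p.eval q)
      ((1 + q ^ 2) ^ (-(n : ℝ) / 2 - 1) * (liouvilleDeriv n p).eval q) q := by
  have hpos : (0 : ℝ) < 1 + q ^ 2 := by positivity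
  have hsq : HasDerivAt (fun q : ℝ => 1 + q ^ 2) (2 * q) q := by
    simpa using (hasDerivAt_pow 2 q).const_add 1
  refine ((hsq.rpow_const (p := -(n : ℝ) / 2) (Or.inl hpos.ne')).fun_mul
    (p.hasDerivAt q)).congr_deriv ?_
  rw [Real.rpow_sub_one hpos.ne', liouvilleDeriv]
  simp only [eval_sub, eval_mul, eval_add, eval_pow, eval_X, eval_one, eval_C]
  field_simp
  ring

lemma lam_eq_mul_eval (N : ℕ) (a : ℕ → ℝ × ℝ → ℝ) (q : ℝ) (z : ℝ × ℝ) :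
    lam N a q z = (1 + q ^ 2) ^ (-(N : ℝ) / 2) * (X ^ N + polyOfCoeffs (a · z) N).eval q := by
  simp [lam, eval_polyOfCoeffs]

lemma fderiv_lam_apply {N : ℕ} {a : ℕ → ℝ × ℝ → ℝ} {z : ℝ × ℝ}
    (hd : ∀ k < N, DifferentiableAt ℝ (a k) z) (q : ℝ) (w : ℝ × ℝ) :
    fderiv ℝ (lam N a q) z w =
      (1 + q ^ 2) ^ (-(N : ℝ) / 2) * (polyOfCoeffs (fun k => fderiv ℝ (a k) z w) N).eval q := by
  have hsum : HasFDerivAt (fun z => q ^ N + ∑ k ∈ range N, a k z * q ^ k)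
      (∑ k ∈ range N, q ^ k • fderiv ℝ (a k) z) z :=
    (HasFDerivAt.fun_sum fun k hk =>
      (hd k (mem_range.mp hk)).hasFDerivAt.mul_const (q ^ k)).const_add _
  have hlam : lam N a q = fun z => (1 + q ^ 2) ^ (-(N : ℝ) / 2) *
      (q ^ N + ∑ k ∈ range N, a k z * q ^ k) := rfl
  rw [hlam, (hsum.const_mul _).fderiv]
  simp [eval_polyOfCoeffs, mul_comm]

lemma liouville_iff_polyOfCoeffs_eq_liouvilleRHS {N : ℕ} {a : ℕ → ℝ × ℝ → ℝ} {z : ℝ × ℝ}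
    (hd : ∀ k < N, DifferentiableAt ℝ (a k) z) (haN : a N z = 1) :
    (∀ q : ℝ, pdt (lam N a q) z =
        a (N - 1) z * q * pdx (lam N a q) z +
          (1 + q ^ 2) * deriv (fun q' => lam N a q' z) q * pdx (a (N - 1)) z) ↔
      polyOfCoeffs (fun k => pdt (a k) z) N = liouvilleRHS N (a · z) (fun k => pdx (a k) z) := by
  have hP : X ^ N + polyOfCoeffs (a · z) N = polyOfCoeffs (a · z) (N + 1) := by
    rw [polyOfCoeffs, polyOfCoeffs, sum_range_succ, haN, C_1, one_mul, add_comm]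
  have hderiv : ∀ q, deriv (fun q' => lam N a q' z) q = (1 + q ^ 2) ^ (-(N : ℝ) / 2 - 1) *
      (liouvilleDeriv N (polyOfCoeffs (a · z) (N + 1))).eval q := by
    intro q
    simp_rw [lam_eq_mul_eval, hP]
    exact (hasDerivAt_one_add_sq_rpow_mul_eval N _ q).deriv
  have hpoint : ∀ q : ℝ, (pdt (lam N a q) z =
        a (N - 1) z * q * pdx (lam N a q) z +
          (1 + q ^ 2) * deriv (fun q' => lam N a q' z) q * pdx (a (N - 1)) z) ↔
      (polyOfCoeffs (fun k => pdt (a k) z) N).eval q =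
        (liouvilleRHS N (a · z) (fun k => pdx (a k) z)).eval q := by
    intro q
    have hpos : (0 : ℝ) < 1 + q ^ 2 := by positivity
    rw [pdt, pdx, fderiv_lam_apply hd, fderiv_lam_apply hd, hderiv, Real.rpow_sub_one hpos.ne',
      ← mul_right_inj' (Real.rpow_pos_of_pos hpos (-(N : ℝ) / 2)).ne']
    simp only [liouvilleRHS, eval_add, eval_mul, eval_C, eval_X]
    field_simp
    rfl
  exact ⟨fun h => Polynomial.funext fun q => (hpoint q).1 (h q), fun h q => (hpoint q).2 (by rw [h])⟩

theorem systemA_iff_forall_systemARelations (N : ℕ) (Ω : Set (ℝ × ℝ)) (a : ℕ → ℝ × ℝ → ℝ) :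
    SystemA N Ω a ↔
      ∀ z ∈ Ω, SystemARelations N (a · z) (fun k => pdx (a k) z) (fun k => pdt (a k) z) :=
  Iff.rfl

/-- `λ` satisfies the Liouville-type equation
`∂_t λ = a^{N-1} q ∂_x λ + (1+q²)(∂_q λ) ∂_x a^{N-1}` for all `q` and all points of `Ω`
if and only if the coefficients `a^k` satisfy the hydrodynamic type system (A). -/
theorem statement0 (N : ℕ) (hN : 2 ≤ N) (Ω : Set (ℝ × ℝ)) (hΩ : IsOpen Ω)
    (a : ℕ → ℝ × ℝ → ℝ)
    (hdiff : ∀ k < N, DifferentiableOn ℝ (a k) Ω)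
    (haN : ∀ z, a N z = 1) :
    (∀ (q : ℝ), ∀ z ∈ Ω,
        pdt (lam N a q) z =
          a (N - 1) z * q * pdx (lam N a q) z +
            (1 + q ^ 2) * deriv (fun q' => lam N a q' z) q * pdx (a (N - 1)) z) ↔
      SystemA N Ω a := by
  rw [systemA_iff_forall_systemARelations, forall_comm]
  refine forall_congr' fun z => ?_
  rw [forall_comm]
  refine forall_congr' fun hz => ?_
  have hd : ∀ k < N, DifferentiableAt ℝ (a k) z :=
    fun k hk => (hdiff k hk).differentiableAt (hΩ.mem_nhds hz)
  rw [liouville_iff_polyOfCoeffs_eq_liouvilleRHS hd (haN z)]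
  exact polyOfCoeffs_eq_liouvilleRHS_iff (by omega) (a · z) _ _
end

section
/- Let N ≥ 2 and let a⁰,…,a^{N-1} : Ω → ℝ be differentiable functions on an open set Ω ⊆ ℝ² satisfying system (A). Let λ(q, a) = (1+q²)^{-N/2}·(q^N + Σ_{k=0}^{N-1} a^k q^k), and let q₀ : Ω → ℝ be a differentiable function such that (∂λ/∂q)(q₀(x,t), a(x,t)) = 0 at every point of Ω. Then the function r(x,t) := λ(q₀(x,t), a(x,t)) satisfies the diagonal equation ∂_t r = a^{N-1}(x,t)·q₀(x,t)·∂_x r on Ω. (Thus the critical values of λ are Riemann invariants of system (A) with characteristic velocities a^{N-1}q₀.) -/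
open Finset

theorem hasDerivAt_sum_mul_pow (A : ℕ → ℝ) (n : ℕ) (q : ℝ) :
    HasDerivAt (fun s => ∑ k ∈ range (n + 1), A k * s ^ k)
      (∑ k ∈ range n, (k + 1) * A (k + 1) * q ^ k) q := by
  refine (HasDerivAt.fun_sum fun k (_ : k ∈ range (n + 1)) =>
    (hasDerivAt_pow k q).const_mul (A k)).congr_deriv ?_
  rw [sum_range_succ']
  simp only [Nat.cast_add, Nat.cast_one, add_tsub_cancel_right, CharP.cast_eq_zero, zero_mul,
    mul_zero, add_zero]
  exact sum_congr rfl fun k _ => by ring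

theorem hasDerivAt_one_add_sq_rpow_mul (p : ℝ) {P : ℝ → ℝ} {P' q : ℝ} (hP : HasDerivAt P P' q) :
    HasDerivAt (fun s => (1 + s ^ 2) ^ p * P s)
      ((1 + q ^ 2) ^ (p - 1) * ((1 + q ^ 2) * P' + 2 * p * q * P q)) q := by
  have hpos : 0 < 1 + q ^ 2 := by positivity
  have hφ := ((hasDerivAt_pow 2 q).const_add 1).rpow_const (p := p) (Or.inl hpos.ne')
  refine (hφ.mul hP).congr_deriv ?_
  rw [← sub_add_cancel p 1, Real.rpow_add_one hpos.ne', add_sub_cancel_right]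
  push_cast
  ring

theorem hasDerivAt_one_add_sq_rpow_mul_eq_zero_iff (p : ℝ) {P : ℝ → ℝ} {P' q : ℝ}
    (hP : HasDerivAt P P' q) :
    HasDerivAt (fun s => (1 + s ^ 2) ^ p * P s) 0 q ↔ (1 + q ^ 2) * P' + 2 * p * q * P q = 0 := by
  have hpos : 0 < (1 + q ^ 2) ^ (p - 1) := by positivity
  refine ⟨fun h => ?_, fun h => ?_⟩
  · exact (mul_eq_zero.1 ((hasDerivAt_one_add_sq_rpow_mul p hP).unique h)).resolve_left hpos.ne'
  · simpa [h] using hasDerivAt_one_add_sq_rpow_mul p hP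

theorem HasFDerivAt.sum_mul_comp_of_hasDerivAt_zero {E ι : Type*} [NormedAddCommGroup E]
    [NormedSpace ℝ E] {s : Finset ι} {c : ι → E → ℝ} {c' : ι → E →L[ℝ] ℝ} {g : ι → ℝ → ℝ}
    {g' : ι → ℝ} {q₀ : E → ℝ} {q' : E →L[ℝ] ℝ} {z : E}
    (hc : ∀ k ∈ s, HasFDerivAt (c k) (c' k) z) (hg : ∀ k ∈ s, HasDerivAt (g k) (g' k) (q₀ z))
    (hq : HasFDerivAt q₀ q' z) (hcrit : HasDerivAt (fun x => ∑ k ∈ s, c k z * g k x) 0 (q₀ z)) :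
    HasFDerivAt (fun w => ∑ k ∈ s, c k w * g k (q₀ w)) (∑ k ∈ s, g k (q₀ z) • c' k) z := by
  have hsum : ∑ k ∈ s, c k z * g' k = 0 :=
    (HasDerivAt.fun_sum fun k hk => (hg k hk).const_mul (c k z)).unique hcrit
  refine (HasFDerivAt.fun_sum fun k hk =>
    (hc k hk).mul ((hg k hk).comp_hasFDerivAt z hq)).congr_fderiv ?_
  simp only [Function.comp_apply, sum_add_distrib, smul_smul, ← sum_smul, hsum, zero_smul,
    zero_add]

theorem sum_pow_mul_coeff_eq (M : ℕ) (q : ℝ) (A : ℕ → ℝ) :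
    A 1 + ∑ j ∈ range M, q ^ (j + 1) * (((j : ℝ) + 2) * A (j + 2) - ((M : ℝ) + 1 - j) * A j) =
      A M * q ^ (M + 1) + ((1 + q ^ 2) * ∑ k ∈ range (M + 1), (k + 1) * A (k + 1) * q ^ k -
        ((M : ℝ) + 1) * q * ∑ k ∈ range (M + 2), A k * q ^ k) := by
  have hsplit : ∑ j ∈ range M, q ^ (j + 1) * (((j : ℝ) + 2) * A (j + 2) - ((M : ℝ) + 1 - j) * A j) =
      ∑ j ∈ range M, ((j : ℝ) + 2) * A (j + 2) * q ^ (j + 1) -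
        ∑ j ∈ range M, ((M : ℝ) + 1 - j) * A j * q ^ (j + 1) := by
    rw [← sum_sub_distrib]
    exact sum_congr rfl fun j _ => by ring
  have hP' : ∑ k ∈ range (M + 1), (k + 1) * A (k + 1) * q ^ k =
      A 1 + ∑ j ∈ range M, ((j : ℝ) + 2) * A (j + 2) * q ^ (j + 1) := by
    rw [sum_range_succ', add_comm]
    push_cast
    congr 1
    · ring
    · exact sum_congr rfl fun j _ => by ring
  have hq2P' : q ^ 2 * ∑ k ∈ range (M + 1), (k + 1) * A (k + 1) * q ^ k =
      ∑ k ∈ range (M + 2), (k : ℝ) * A k * q ^ (k + 1) := by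
    rw [mul_sum, sum_range_succ' _ (M + 1)]
    push_cast
    simp only [zero_mul, add_zero]
    exact sum_congr rfl fun k _ => by ring
  have hqP : ((M : ℝ) + 1) * q * ∑ k ∈ range (M + 2), A k * q ^ k =
      ∑ k ∈ range (M + 2), ((M : ℝ) + 1) * A k * q ^ (k + 1) := by
    rw [mul_sum]
    exact sum_congr rfl fun k _ => by ring
  have hdiff : ∑ k ∈ range (M + 2), ((M : ℝ) + 1) * A k * q ^ (k + 1) -
      ∑ k ∈ range (M + 2), (k : ℝ) * A k * q ^ (k + 1) =
      ∑ j ∈ range M, ((M : ℝ) + 1 - j) * A j * q ^ (j + 1) + A M * q ^ (M + 1) := by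
    rw [← sum_sub_distrib, sum_range_succ, sum_range_succ]
    push_cast
    rw [add_assoc]
    congr 1
    · exact sum_congr rfl fun j _ => by ring
    · ring
  linear_combination hsplit - hP' - hq2P' + hqP + hdiff

theorem sum_pow_mul_eq_of_critical {N : ℕ} (hN : 1 ≤ N) {q : ℝ} {A X T : ℕ → ℝ}
    (hcrit : (1 + q ^ 2) * ∑ k ∈ range N, (k + 1) * A (k + 1) * q ^ k =
      N * q * ∑ k ∈ range (N + 1), A k * q ^ k)
    (hT₀ : T 0 = A 1 * X (N - 1))
    (hT : ∀ k, 1 ≤ k → k ≤ N - 1 →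
      T k = A (N - 1) * X (k - 1) +
        (((k : ℝ) + 1) * A (k + 1) - ((N : ℝ) + 1 - (k : ℝ)) * A (k - 1)) * X (N - 1)) :
    ∑ k ∈ range N, q ^ k * T k = A (N - 1) * q * ∑ k ∈ range N, q ^ k * X k := by
  obtain ⟨M, rfl⟩ : ∃ M, N = M + 1 := ⟨N - 1, by omega⟩
  simp only [add_tsub_cancel_right] at hT₀ hT ⊢
  have hTsucc : ∀ j ∈ range M, q ^ (j + 1) * T (j + 1) =
      A M * (q ^ (j + 1) * X j) +
        q ^ (j + 1) * (((j : ℝ) + 2) * A (j + 2) - ((M : ℝ) + 1 - j) * A j) * X M := by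
    intro j hj
    rw [hT (j + 1) (by omega) (by simp at hj; omega), add_tsub_cancel_right]
    push_cast
    ring
  have hXshift : q * ∑ j ∈ range M, q ^ j * X j = ∑ j ∈ range M, q ^ (j + 1) * X j := by
    rw [mul_sum]
    exact sum_congr rfl fun j _ => by ring
  rw [sum_range_succ', sum_congr rfl hTsucc, sum_add_distrib, ← mul_sum, ← sum_mul, hT₀,
    sum_range_succ]
  push_cast at hcrit
  linear_combination X M * (sum_pow_mul_coeff_eq M q A + hcrit) - A M * hXshift

theorem lam_eq_sum {N : ℕ} {a : ℕ → ℝ × ℝ → ℝ} {z : ℝ × ℝ} (haN : a N z = 1) (q : ℝ) :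
    lam N a q z = (1 + q ^ 2) ^ (-(N : ℝ) / 2) * ∑ k ∈ range (N + 1), a k z * q ^ k := by
  rw [lam, sum_range_succ, haN]
  ring

theorem fderiv_lam_comp_apply {N : ℕ} {a : ℕ → ℝ × ℝ → ℝ} {q₀ : ℝ × ℝ → ℝ} {z : ℝ × ℝ}
    (ha : ∀ k < N, DifferentiableAt ℝ (a k) z) (haN : ∀ w, a N w = 1)
    (hq : DifferentiableAt ℝ q₀ z) (hcrit : HasDerivAt (fun s => lam N a s z) 0 (q₀ z))
    (v : ℝ × ℝ) :
    fderiv ℝ (fun w => lam N a (q₀ w) w) z v =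
      (1 + q₀ z ^ 2) ^ (-(N : ℝ) / 2) * ∑ k ∈ range N, q₀ z ^ k * fderiv ℝ (a k) z v := by
  have hlam : ∀ s w, lam N a s w =
      ∑ k ∈ range (N + 1), a k w * ((1 + s ^ 2) ^ (-(N : ℝ) / 2) * s ^ k) := fun s w => by
    rw [lam_eq_sum (haN w), mul_sum]
    exact sum_congr rfl fun k _ => by ring
  have haN' : a N = fun _ => 1 := funext haN
  have hc : ∀ k ∈ range (N + 1), HasFDerivAt (a k) (fderiv ℝ (a k) z) z := by
    intro k hk
    rcases (mem_range_succ_iff.1 hk).lt_or_eq with hk | rfl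
    · exact (ha k hk).hasFDerivAt
    · rw [haN']
      exact (differentiableAt_const 1).hasFDerivAt
  have hr := HasFDerivAt.sum_mul_comp_of_hasDerivAt_zero hc
    (fun k _ => hasDerivAt_one_add_sq_rpow_mul _ (hasDerivAt_pow k (q₀ z))) hq.hasFDerivAt
    (by simpa only [hlam] using hcrit)
  simp only [hlam]
  rw [hr.fderiv, sum_range_succ, haN']
  simp [mul_sum, mul_assoc]

/-- if `q₀` is a differentiable branch of critical points of `λ` (i.e.
`∂λ/∂q = 0` at `q₀`), then the critical value `r = λ(q₀, a)` is a Riemann invariant: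
`∂_t r = a^{N-1}·q₀·∂_x r` on `Ω`. -/
theorem statement2 (N : ℕ) (hN : 2 ≤ N) (Ω : Set (ℝ × ℝ)) (hΩ : IsOpen Ω)
    (a : ℕ → ℝ × ℝ → ℝ)
    (hdiff : ∀ k < N, DifferentiableOn ℝ (a k) Ω)
    (haN : ∀ z, a N z = 1)
    (hA : SystemA N Ω a)
    (q₀ : ℝ × ℝ → ℝ) (hq₀ : DifferentiableOn ℝ q₀ Ω)
    (hcrit : ∀ z ∈ Ω, deriv (fun q => lam N a q z) (q₀ z) = 0) :
    ∀ z ∈ Ω,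
      pdt (fun w => lam N a (q₀ w) w) z =
        a (N - 1) z * q₀ z * pdx (fun w => lam N a (q₀ w) w) z := by
  intro z hz
  have hzΩ := hΩ.mem_nhds hz
  have hP := hasDerivAt_sum_mul_pow (a · z) N (q₀ z)
  have hlam : (fun s => lam N a s z) =
      fun s => (1 + s ^ 2) ^ (-(N : ℝ) / 2) * ∑ k ∈ range (N + 1), a k z * s ^ k :=
    funext (lam_eq_sum (haN z))
  have hcrit' : HasDerivAt (fun s => lam N a s z) 0 (q₀ z) := by
    rw [← hcrit z hz, hlam]
    exact (hasDerivAt_one_add_sq_rpow_mul _ hP).differentiableAt.hasDerivAt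
  have hcoef : (1 + q₀ z ^ 2) * ∑ k ∈ range N, (k + 1) * a (k + 1) z * q₀ z ^ k =
      N * q₀ z * ∑ k ∈ range (N + 1), a k z * q₀ z ^ k := by
    linear_combination (hasDerivAt_one_add_sq_rpow_mul_eq_zero_iff _ hP).1 (hlam ▸ hcrit')
  have hr := fderiv_lam_comp_apply (fun k hk => (hdiff k hk).differentiableAt hzΩ) haN
    (hq₀.differentiableAt hzΩ) hcrit'
  have hsum := sum_pow_mul_eq_of_critical (A := (a · z)) (X := fun k => pdx (a k) z)
    (T := fun k => pdt (a k) z) (by omega) hcoef (hA z hz).1 (hA z hz).2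
  simp only [pdt, pdx, hr] at hsum ⊢
  rw [hsum]
  ring
end

section
/- Let N ≥ 2 and let a⁰,…,a^{N-1} : Ω → ℝ be differentiable functions on an open set Ω ⊆ ℝ² satisfying system (A). Let λ(q, a) = (1+q²)^{-N/2}·(q^N + Σ_{k=0}^{N-1} a^k q^k), and let q : Ω → ℝ be a differentiable function such that λ(q(x,t), a(x,t)) is constant on Ω and (∂λ/∂q)(q(x,t), a(x,t)) ≠ 0 at every point of Ω. Then q satisfies ∂_t q = a^{N-1}·q·∂_x q − (1+q²)·∂_x a^{N-1} on Ω. -/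
open Finset Filter Topology

noncomputable section

-- `lam N a q z = (1 + q²)^(-N/2) * lamNum N (a · z) q`, and `lamDerivQ` is its `q`-derivative.
def lamNum (N : ℕ) (b : ℕ → ℝ) (Q : ℝ) : ℝ := Q ^ N + ∑ k ∈ range N, b k * Q ^ k

def lamNumDeriv (N : ℕ) (b : ℕ → ℝ) (Q : ℝ) : ℝ :=
  N * Q ^ (N - 1) + ∑ k ∈ range N, b k * (k * Q ^ (k - 1))

def lamDerivQ (N : ℕ) (b : ℕ → ℝ) (Q : ℝ) : ℝ :=
  (1 + Q ^ 2) ^ (-(N : ℝ) / 2) * lamNumDeriv N b Q -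
    N * Q * (1 + Q ^ 2) ^ (-(N : ℝ) / 2 - 1) * lamNum N b Q

end

section Derivatives

variable {E : Type*} [NormedAddCommGroup E] [NormedSpace ℝ E] {N : ℕ} {u : E → ℝ}
  {A : ℕ → E → ℝ} {u' : E →L[ℝ] ℝ} {A' : ℕ → E →L[ℝ] ℝ} {x : E}

theorem hasFDerivAt_lamNum_comp (hu : HasFDerivAt u u' x)
    (hA : ∀ k < N, HasFDerivAt (A k) (A' k) x) :
    HasFDerivAt (fun w => lamNum N (fun k => A k w) (u w))
      (lamNumDeriv N (fun k => A k x) (u x) • u' + ∑ k ∈ range N, u x ^ k • A' k) x := by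
  refine ((hu.pow N).add (HasFDerivAt.fun_sum fun k hk =>
    (hA k (mem_range.mp hk)).mul (hu.pow k))).congr_fderiv ?_
  ext v
  simp [lamNumDeriv, sum_add_distrib, add_mul, sum_mul, mul_assoc, add_assoc]

theorem hasFDerivAt_lam_comp (hu : HasFDerivAt u u' x)
    (hA : ∀ k < N, HasFDerivAt (A k) (A' k) x) :
    HasFDerivAt (fun w => (1 + u w ^ 2) ^ (-(N : ℝ) / 2) * lamNum N (fun k => A k w) (u w))
      (lamDerivQ N (fun k => A k x) (u x) • u' +
        (1 + u x ^ 2) ^ (-(N : ℝ) / 2) • ∑ k ∈ range N, u x ^ k • A' k) x := by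
  have hC := ((hu.pow 2).const_add 1).rpow_const (p := -(N : ℝ) / 2) (Or.inl (by positivity))
  refine (hC.mul (hasFDerivAt_lamNum_comp hu hA)).congr_fderiv ?_
  ext v
  simp [lamDerivQ]
  ring

end Derivatives

theorem hasDerivAt_lam (N : ℕ) (a : ℕ → ℝ × ℝ → ℝ) (Q : ℝ) (z : ℝ × ℝ) :
    HasDerivAt (fun p => lam N a p z) (lamDerivQ N (a · z) Q) Q := by
  simpa [lam, lamNum] using (hasFDerivAt_lam_comp (N := N) (hasFDerivAt_id Q)
    fun k _ => hasFDerivAt_const (a k z) Q).hasDerivAt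

theorem lamDerivQ_mul_fderiv_add_eq_zero {N : ℕ} {a : ℕ → ℝ × ℝ → ℝ} {q : ℝ × ℝ → ℝ}
    {z : ℝ × ℝ} {c : ℝ} (hq : DifferentiableAt ℝ q z)
    (ha : ∀ k < N, DifferentiableAt ℝ (a k) z) (hc : ∀ᶠ w in 𝓝 z, lam N a (q w) w = c)
    (v : ℝ × ℝ) :
    lamDerivQ N (a · z) (q z) * fderiv ℝ q z v +
      (1 + q z ^ 2) ^ (-(N : ℝ) / 2) * ∑ k ∈ range N, fderiv ℝ (a k) z v * q z ^ k = 0 := by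
  have h : HasFDerivAt (fun w => lam N a (q w) w) _ z :=
    hasFDerivAt_lam_comp hq.hasFDerivAt fun k hk => (ha k hk).hasFDerivAt
  have h0 := h.unique ((hasFDerivAt_const c z).congr_of_eventuallyEq hc)
  simpa [mul_comm] using DFunLike.congr_fun h0 v

theorem sum_range_mul_pow_succ (M : ℕ) (Q : ℝ) (c : ℕ → ℝ) :
    ∑ j ∈ range M, c j * Q ^ (j + 1) =
      Q * ∑ k ∈ range (M + 1), c k * Q ^ k - c M * Q ^ (M + 1) := by
  rw [sum_range_succ, mul_add, mul_sum]
  ring_nf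
  exact sum_congr rfl fun j _ => by ring

theorem sum_range_mul_pow_succ_eq_lamNum (M : ℕ) (Q : ℝ) (b : ℕ → ℝ) :
    ∑ j ∈ range M, b j * Q ^ (j + 1) =
      Q * (lamNum (M + 1) b Q - Q ^ (M + 1)) - b M * Q ^ (M + 1) := by
  rw [lamNum, add_sub_cancel_left, sum_range_mul_pow_succ]

theorem sum_range_natCast_mul_pow_succ_eq_lamNumDeriv (M : ℕ) (Q : ℝ) (b : ℕ → ℝ) :
    ∑ j ∈ range M, (j : ℝ) * b j * Q ^ (j + 1) =
      Q ^ 2 * (lamNumDeriv (M + 1) b Q - (M + 1) * Q ^ M) - M * b M * Q ^ (M + 1) := by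
  have hterm (k : ℕ) : Q ^ 2 * (b k * (k * Q ^ (k - 1))) = k * b k * Q ^ (k + 1) := by
    rcases k with _ | j
    · simp
    · rw [Nat.add_sub_cancel]; push_cast; ring
  have hsum : lamNumDeriv (M + 1) b Q - (M + 1) * Q ^ M =
      ∑ k ∈ range (M + 1), b k * (k * Q ^ (k - 1)) := by
    rw [lamNumDeriv]; push_cast; ring
  rw [hsum, mul_sum, sum_congr rfl fun k _ => hterm k, sum_range_succ]
  ring

theorem lamNumDeriv_succ_eq {M : ℕ} (Q : ℝ) {b : ℕ → ℝ} (hb : b (M + 1) = 1) :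
    lamNumDeriv (M + 1) b Q = b 1 + ∑ j ∈ range M, ((j : ℝ) + 2) * b (j + 2) * Q ^ (j + 1) := by
  have hshift (j : ℕ) : b (j + 1) * (((j + 1 : ℕ) : ℝ) * Q ^ (j + 1 - 1)) =
      ((j : ℝ) + 1) * b (j + 1) * Q ^ j := by
    rw [Nat.add_sub_cancel]; push_cast; ring
  calc lamNumDeriv (M + 1) b Q = ∑ j ∈ range (M + 1), ((j : ℝ) + 1) * b (j + 1) * Q ^ j := by
        rw [sum_range_succ, hb, lamNumDeriv, sum_range_succ', sum_congr rfl fun j _ => hshift j]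
        push_cast
        ring
    _ = _ := by
        rw [sum_range_succ', add_comm]
        congr 1
        · simp
        · exact sum_congr rfl fun j _ => by push_cast; ring

-- System (A) at a point, with `b = a`, `u = ∂ₓa`, `w = ∂ₜa`, multiplied by `Q^k` and summed.
theorem sum_mul_pow_of_systemA (N : ℕ) (Q : ℝ) (b u w : ℕ → ℝ) (hb : b N = 1)
    (h0 : w 0 = b 1 * u (N - 1))
    (hk : ∀ k, 1 ≤ k → k ≤ N - 1 →
      w k = b (N - 1) * u (k - 1) +
        (((k : ℝ) + 1) * b (k + 1) - ((N : ℝ) + 1 - (k : ℝ)) * b (k - 1)) * u (N - 1)) :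
    ∑ k ∈ range N, w k * Q ^ k =
      b (N - 1) * Q * ∑ k ∈ range N, u k * Q ^ k +
        u (N - 1) * ((1 + Q ^ 2) * lamNumDeriv N b Q - N * Q * lamNum N b Q) := by
  obtain _ | M := N
  · simp [lamNum, lamNumDeriv]
  simp only [Nat.add_sub_cancel] at h0 hk ⊢
  have hw (j : ℕ) (hj : j ∈ range M) : w (j + 1) * Q ^ (j + 1) =
      b M * (u j * Q ^ (j + 1)) + u M * (((j : ℝ) + 2) * b (j + 2) * Q ^ (j + 1)) -
        u M * (((M : ℝ) + 1) * (b j * Q ^ (j + 1)) - (j : ℝ) * b j * Q ^ (j + 1)) := by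
    rw [hk (j + 1) (by omega) (by simp at hj; omega)]
    push_cast
    ring
  rw [sum_range_succ', sum_congr rfl hw, sum_sub_distrib, sum_add_distrib, ← mul_sum, ← mul_sum,
    ← mul_sum, sum_sub_distrib, ← mul_sum, h0]
  push_cast
  linear_combination b M * sum_range_mul_pow_succ M Q u -
    u M * ((M : ℝ) + 1) * sum_range_mul_pow_succ_eq_lamNum M Q b +
    u M * sum_range_natCast_mul_pow_succ_eq_lamNumDeriv M Q b - u M * lamNumDeriv_succ_eq Q hb

theorem statement3_general (N : ℕ) (Ω : Set (ℝ × ℝ)) (hΩ : IsOpen Ω)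
    (a : ℕ → ℝ × ℝ → ℝ)
    (hdiff : ∀ k < N, DifferentiableOn ℝ (a k) Ω)
    (haN : ∀ z, a N z = 1)
    (hA : SystemA N Ω a)
    (q : ℝ × ℝ → ℝ) (hq : DifferentiableOn ℝ q Ω)
    (hconst : ∃ c : ℝ, ∀ z ∈ Ω, lam N a (q z) z = c)
    (hreg : ∀ z ∈ Ω, deriv (fun q' => lam N a q' z) (q z) ≠ 0) :
    ∀ z ∈ Ω,
      pdt q z =
        a (N - 1) z * q z * pdx q z - (1 + (q z) ^ 2) * pdx (a (N - 1)) z := by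
  intro z hz
  have hL : lamDerivQ N (a · z) (q z) ≠ 0 := (hasDerivAt_lam N a (q z) z).deriv ▸ hreg z hz
  have hΩz : Ω ∈ 𝓝 z := hΩ.mem_nhds hz
  obtain ⟨c, hc⟩ := hconst
  set Q := q z
  set C := (1 + Q ^ 2) ^ (-(N : ℝ) / 2)
  set L := lamDerivQ N (a · z) Q
  have hdir := lamDerivQ_mul_fderiv_add_eq_zero ((hq z hz).differentiableAt hΩz)
    (fun k hk => (hdiff k hk z hz).differentiableAt hΩz) (eventually_of_mem hΩz hc)
  have hx : L * pdx q z + C * ∑ k ∈ range N, pdx (a k) z * Q ^ k = 0 := hdir (1, 0)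
  have ht : L * pdt q z + C * ∑ k ∈ range N, pdt (a k) z * Q ^ k = 0 := hdir (0, 1)
  have hkey := sum_mul_pow_of_systemA N Q (a · z) (fun k => pdx (a k) z) (fun k => pdt (a k) z)
    (haN z) (hA z hz).1 (hA z hz).2
  have hC : C = (1 + Q ^ 2) ^ (-(N : ℝ) / 2 - 1) * (1 + Q ^ 2) := by
    rw [← Real.rpow_add_one (by positivity), sub_add_cancel]
  have hLdef : L = C * lamNumDeriv N (a · z) Q -
      N * Q * (1 + Q ^ 2) ^ (-(N : ℝ) / 2 - 1) * lamNum N (a · z) Q := rfl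
  refine mul_left_cancel₀ hL ?_
  linear_combination ht - a (N - 1) z * Q * hx - C * hkey +
    pdx (a (N - 1)) z * (1 + Q ^ 2) * hLdef + pdx (a (N - 1)) z * N * Q * lamNum N (a · z) Q * hC

/-- if `q` is a differentiable function on `Ω` such that `λ(q(x,t), a(x,t))`
is constant on `Ω` and `∂λ/∂q ≠ 0` along `q`, then `q` satisfies
`∂_t q = a^{N-1}·q·∂_x q − (1+q²)·∂_x a^{N-1}` on `Ω`. -/
theorem statement3 (N : ℕ) (hN : 2 ≤ N) (Ω : Set (ℝ × ℝ)) (hΩ : IsOpen Ω)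
    (a : ℕ → ℝ × ℝ → ℝ)
    (hdiff : ∀ k < N, DifferentiableOn ℝ (a k) Ω)
    (haN : ∀ z, a N z = 1)
    (hA : SystemA N Ω a)
    (q : ℝ × ℝ → ℝ) (hq : DifferentiableOn ℝ q Ω)
    (hconst : ∃ c : ℝ, ∀ z ∈ Ω, lam N a (q z) z = c)
    (hreg : ∀ z ∈ Ω, deriv (fun q' => lam N a q' z) (q z) ≠ 0) :
    ∀ z ∈ Ω,
      pdt q z =
        a (N - 1) z * q z * pdx q z - (1 + (q z) ^ 2) * pdx (a (N - 1)) z :=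
  statement3_general N Ω hΩ a hdiff haN hA q hq hconst hreg
end

section
/- Let g : Ω → ℝ and q : Ω → ℝ be differentiable functions on an open set Ω ⊆ ℝ² with coordinates (x,t), and suppose ∂_t q = g·q·∂_x q − (1+q²)·∂_x g on Ω. Then the function p := −q/√(1+q²), which takes values in (−1,1), satisfies the conservation law ∂_t p = ∂_x( g·√(1−p²) ) on Ω. -/
/-!
Substitute `q = tan θ`, i.e. `θ = arctan q`. Then `p = -sin θ` and `√(1 - p²) = cos θ`, while
`∂θ = ∂q / (1 + q²)`, so the equation for `q` reads `∂_t θ = g tan θ ∂_x θ - ∂_x g`. Multiplying by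
`-cos θ` gives `∂_t (-sin θ) = ∂_x g cos θ - g sin θ ∂_x θ = ∂_x (g cos θ)`.
-/

open Real

section PartialDerivatives

variable {f : ℝ → ℝ} {f' : ℝ} {u v : ℝ × ℝ → ℝ} {z : ℝ × ℝ}

lemma pdx_comp (hf : HasDerivAt f f' (u z)) (hu : DifferentiableAt ℝ u z) :
    pdx (fun w => f (u w)) z = f' * pdx u z := by
  rw [pdx, pdx, ← Function.comp_def, (hf.comp_hasFDerivAt z hu.hasFDerivAt).fderiv]
  rfl

lemma pdt_comp (hf : HasDerivAt f f' (u z)) (hu : DifferentiableAt ℝ u z) :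
    pdt (fun w => f (u w)) z = f' * pdt u z := by
  rw [pdt, pdt, ← Function.comp_def, (hf.comp_hasFDerivAt z hu.hasFDerivAt).fderiv]
  rfl

lemma pdx_mul (hu : DifferentiableAt ℝ u z) (hv : DifferentiableAt ℝ v z) :
    pdx (fun w => u w * v w) z = u z * pdx v z + v z * pdx u z := by
  rw [pdx, pdx, pdx, fderiv_fun_mul hu hv]
  rfl

end PartialDerivatives

lemma neg_div_sqrt_one_add_sq (y : ℝ) : -y / √(1 + y ^ 2) = -sin (arctan y) := by
  rw [sin_arctan, neg_div]

lemma sqrt_one_sub_neg_sin_arctan_sq (y : ℝ) :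
    √(1 - (-sin (arctan y)) ^ 2) = cos (arctan y) := by
  rw [neg_sq, ← cos_sq', sqrt_sq (cos_arctan_pos y).le]

lemma neg_sin_arctan_mem_Ioo (y : ℝ) : -sin (arctan y) ∈ Set.Ioo (-1 : ℝ) 1 := by
  have hcos := cos_arctan_pos y
  have hpyth := sin_sq_add_cos_sq (arctan y)
  constructor <;> nlinarith

lemma sin_arctan_eq_mul_cos_arctan (y : ℝ) : sin (arctan y) = y * cos (arctan y) := by
  rw [sin_arctan, cos_arctan, mul_one_div]

/-- if `∂_t q = g·q·∂_x q − (1+q²)·∂_x g` on an open set `Ω`, then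
`p := −q/√(1+q²)` takes values in `(−1,1)` and satisfies the conservation law
`∂_t p = ∂_x(g·√(1−p²))` on `Ω`. -/
theorem statement4 (Ω : Set (ℝ × ℝ)) (hΩ : IsOpen Ω)
    (g q : ℝ × ℝ → ℝ)
    (hg : DifferentiableOn ℝ g Ω) (hq : DifferentiableOn ℝ q Ω)
    (heq : ∀ z ∈ Ω,
      pdt q z = g z * q z * pdx q z - (1 + (q z) ^ 2) * pdx g z) :
    (∀ z, -(q z) / Real.sqrt (1 + (q z) ^ 2) ∈ Set.Ioo (-1 : ℝ) 1) ∧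
    ∀ z ∈ Ω,
      pdt (fun w => -(q w) / Real.sqrt (1 + (q w) ^ 2)) z =
        pdx (fun w =>
          g w * Real.sqrt (1 - (-(q w) / Real.sqrt (1 + (q w) ^ 2)) ^ 2)) z := by
  simp only [neg_div_sqrt_one_add_sq, sqrt_one_sub_neg_sin_arctan_sq]
  refine ⟨fun z => neg_sin_arctan_mem_Ioo (q z), fun z hz => ?_⟩
  have hqz : DifferentiableAt ℝ q z := (hq z hz).differentiableAt (hΩ.mem_nhds hz)
  have hgz : DifferentiableAt ℝ g z := (hg z hz).differentiableAt (hΩ.mem_nhds hz)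
  have hcos := (hasDerivAt_arctan (q z)).cos
  have hcosq : DifferentiableAt ℝ (fun w => cos (arctan (q w))) z :=
    (hcos.comp_hasFDerivAt z hqz.hasFDerivAt).differentiableAt
  rw [pdt_comp (f := fun y => -sin (arctan y)) (hasDerivAt_arctan (q z)).sin.neg hqz,
    pdx_mul hgz hcosq, pdx_comp hcos hqz, heq z hz, sin_arctan_eq_mul_cos_arctan]
  field_simp
  ring
end

section
/- Let U ⊆ ℝ^N be open with coordinates r = (r¹,…,r^N), and let q₁,…,q_N : U → ℝ and A : U → ℝ be twice continuously differentiable with q_i(r) ≠ q_k(r) for all i ≠ k and all r ∈ U. Suppose the Gibbons–Tsarev type system holds: for all i ≠ k, ∂_i q_k = (1+q_k²)/(q_i − q_k)·∂_i A and ∂_i ∂_k A = 2(1+q_i q_k)/(q_i − q_k)²·∂_i A·∂_k A (where ∂_i = ∂/∂r^i). Define, for q ∈ ℝ with q ∉ {q₁(r),…,q_N(r)}, the functions F_j(q,r) = (1+q²)·∂_j A(r)/(q_j(r) − q). Then the Frobenius compatibility condition for the overdetermined Löwner-type system ∂_i q = F_i(q,r) holds: for all i ≠ k, ∂_k F_i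 + F_k·∂_q F_i = ∂_i F_k + F_i·∂_q F_k. -/
/-- Partial derivative along the `i`-th coordinate direction in `ℝ^N`. -/
noncomputable def pd {N : ℕ} (i : Fin N) (f : (Fin N → ℝ) → ℝ) (r : Fin N → ℝ) : ℝ :=
  fderiv ℝ f r (Pi.single i 1)

/-- The right-hand side `F_j(q,r) = (1+q²)·∂_j A(r)/(q_j(r) − q)` of the
Löwner-type system `∂_j q = F_j(q,r)`. -/
noncomputable def lownerF {N : ℕ} (qf : Fin N → (Fin N → ℝ) → ℝ) (A : (Fin N → ℝ) → ℝ)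
    (j : Fin N) (q : ℝ) (r : Fin N → ℝ) : ℝ :=
  (1 + q ^ 2) * fderiv ℝ A r (Pi.single j 1) / (qf j r - q)

/-
Both sides are computed explicitly: `∂_k F_i` by the quotient rule, with `∂_k ∂_i A` and
`∂_k q_i` replaced by their Gibbons–Tsarev values, and `∂_q F_i` directly. The right-hand side
is then the left-hand side with `(q_i, ∂_i A)` and `(q_k, ∂_k A)` swapped, and after clearing
the denominators `(q_i − q)²(q_k − q)²(q_i − q_k)²` the left-hand side is a polynomial
symmetric under this swap.
-/

section PartialDerivatives

variable {N : ℕ} {f g : (Fin N → ℝ) → ℝ} {r : Fin N → ℝ}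

lemma pd_div (k : Fin N) (hf : DifferentiableAt ℝ f r) (hg : DifferentiableAt ℝ g r)
    (hg0 : g r ≠ 0) :
    pd k (fun r' => f r' / g r') r = (pd k f r * g r - f r * pd k g r) / g r ^ 2 := by
  have hinv : HasFDerivAt (fun r' => (g r')⁻¹) (-(g r ^ 2)⁻¹ • fderiv ℝ g r) r :=
    (hasDerivAt_inv hg0).comp_hasFDerivAt r hg.hasFDerivAt
  simp only [pd, div_eq_mul_inv]
  rw [(hf.hasFDerivAt.fun_mul hinv).fderiv]
  simp only [add_apply, smul_apply, smul_eq_mul]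
  field_simp
  ring

lemma ContDiffOn.differentiableAt_pd {U : Set (Fin N → ℝ)} (hf : ContDiffOn ℝ 2 f U)
    (hU : IsOpen U) (hr : r ∈ U) (i : Fin N) : DifferentiableAt ℝ (pd i f) r :=
  (((hf.contDiffAt (hU.mem_nhds hr)).fderiv_right (m := 1) (by norm_num)).clm_apply
    contDiffAt_const).differentiableAt one_ne_zero

end PartialDerivatives

section LownerSystem

variable {N : ℕ} (qf : Fin N → (Fin N → ℝ) → ℝ) (A : (Fin N → ℝ) → ℝ) {r : Fin N → ℝ}

lemma lownerF_eq (j : Fin N) (q : ℝ) :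
    lownerF qf A j q r = (1 + q ^ 2) * pd j A r / (qf j r - q) := rfl

lemma pd_lownerF (i k : Fin N) (q : ℝ) (hA : DifferentiableAt ℝ (pd i A) r)
    (hq : DifferentiableAt ℝ (qf i) r) (hne : qf i r ≠ q) :
    pd k (fun r' => lownerF qf A i q r') r =
      (1 + q ^ 2) * (pd k (pd i A) r * (qf i r - q) - pd i A r * pd k (qf i) r) /
        (qf i r - q) ^ 2 := by
  have hnum : pd k (fun r' => (1 + q ^ 2) * pd i A r') r = (1 + q ^ 2) * pd k (pd i A) r := by
    simp only [pd]
    exact congrArg (· (Pi.single k 1)) (fderiv_const_mul hA _)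
  have hden : pd k (fun r' => qf i r' - q) r = pd k (qf i) r := by
    simp [pd, fderiv_sub_const]
  simp_rw [lownerF_eq]
  rw [pd_div k (hA.const_mul _) (hq.sub_const q) (sub_ne_zero.2 hne), hnum, hden]
  ring

lemma deriv_lownerF (j : Fin N) (q : ℝ) (hne : qf j r ≠ q) :
    deriv (fun q' => lownerF qf A j q' r) q =
      pd j A r * (2 * q * (qf j r - q) + (1 + q ^ 2)) / (qf j r - q) ^ 2 := by
  have hnum : HasDerivAt (fun q' : ℝ => (1 + q' ^ 2) * pd j A r) (2 * q * pd j A r) q := by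
    simpa using ((hasDerivAt_pow 2 q).const_add 1).mul_const (pd j A r)
  have hden : HasDerivAt (fun q' : ℝ => qf j r - q') (-1) q := by
    simpa using (hasDerivAt_id q).const_sub (qf j r)
  refine (hnum.fun_div hden (sub_ne_zero.2 hne)).deriv.trans ?_
  ring

end LownerSystem

/-- the Gibbons–Tsarev type system implies the Frobenius compatibility
condition `∂_k F_i + F_k·∂_q F_i = ∂_i F_k + F_i·∂_q F_k` for the overdetermined
Löwner-type system `∂_i q = F_i(q,r)`. -/
theorem statement5 (N : ℕ) (U : Set (Fin N → ℝ)) (hU : IsOpen U)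
    (qf : Fin N → (Fin N → ℝ) → ℝ) (A : (Fin N → ℝ) → ℝ)
    (hqf : ∀ i, ContDiffOn ℝ 2 (qf i) U) (hA : ContDiffOn ℝ 2 A U)
    (hdist : ∀ i k, i ≠ k → ∀ r ∈ U, qf i r ≠ qf k r)
    (hGT1 : ∀ i k, i ≠ k → ∀ r ∈ U,
      pd i (qf k) r = (1 + (qf k r) ^ 2) / (qf i r - qf k r) * pd i A r)
    (hGT2 : ∀ i k, i ≠ k → ∀ r ∈ U,
      pd i (fun r' => pd k A r') r =
        2 * (1 + qf i r * qf k r) / (qf i r - qf k r) ^ 2 * pd i A r * pd k A r) :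
    ∀ i k, i ≠ k → ∀ r ∈ U, ∀ q : ℝ, (∀ m, q ≠ qf m r) →
      pd k (fun r' => lownerF qf A i q r') r +
          lownerF qf A k q r * deriv (fun q' => lownerF qf A i q' r) q =
        pd i (fun r' => lownerF qf A k q r') r +
          lownerF qf A i q r * deriv (fun q' => lownerF qf A k q' r) q := by
  intro i k hik r hr q hq
  have hqf_diff (m : Fin N) : DifferentiableAt ℝ (qf m) r :=
    ((hqf m).contDiffAt (hU.mem_nhds hr)).differentiableAt two_ne_zero
  have hA_diff (m : Fin N) : DifferentiableAt ℝ (pd m A) r := hA.differentiableAt_pd hU hr m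
  have hAki : pd k (pd i A) r = _ := hGT2 k i hik.symm r hr
  have hAik : pd i (pd k A) r = _ := hGT2 i k hik r hr
  rw [pd_lownerF qf A i k q (hA_diff i) (hqf_diff i) (hq i).symm,
    pd_lownerF qf A k i q (hA_diff k) (hqf_diff k) (hq k).symm,
    deriv_lownerF qf A i q (hq i).symm, deriv_lownerF qf A k q (hq k).symm,
    lownerF_eq, lownerF_eq, hAki, hAik, hGT1 k i hik.symm r hr, hGT1 i k hik r hr]
  have hik_ne := sub_ne_zero.2 (hdist i k hik r hr)
  have hki_ne := sub_ne_zero.2 (hdist k i hik.symm r hr)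
  have hiq := sub_ne_zero.2 (hq i).symm
  have hkq := sub_ne_zero.2 (hq k).symm
  field_simp
  ring
end

section
/- Let a⁰, a¹ : Ω → ℝ be differentiable functions on an open set Ω ⊆ ℝ², with a¹ nonvanishing, satisfying the two-component system (N = 2 case of system (A)): ∂_t a⁰ = a¹·∂_x a¹ and ∂_t a¹ = a¹·∂_x a⁰ + 2(1−a⁰)·∂_x a¹. Define D := √((a⁰−1)² + (a¹)²) > 0 and r¹ := 1 + ((a⁰−1) − D)/2, r² := 1 + ((a⁰−1) + D)/2. Then r¹ and r² are Riemann invariants with the linearly degenerate diagonal dynamics: ∂_t r¹ = 2(1−r²)·∂_x r¹ and ∂_t r² = 2(1−r¹)·∂_x r² on Ω. Moreover a⁰ = r¹ + r² − 1 and (a¹)² = −4(r¹−1)(r²−1). -/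
section SumOfSquares

variable {E : Type*} [NormedAddCommGroup E] [NormedSpace ℝ E] {f g h : E → ℝ} {z : E}

theorem mul_fderiv_eq_of_sq_eq_add_sq (hf : DifferentiableAt ℝ f z) (hg : DifferentiableAt ℝ g z)
    (hh : DifferentiableAt ℝ h z) (hsq : ∀ w, h w ^ 2 = f w ^ 2 + g w ^ 2) (e : E) :
    h z * fderiv ℝ h z e = f z * fderiv ℝ f z e + g z * fderiv ℝ g z e := by
  have hlhs := hh.hasFDerivAt.pow 2
  rw [funext hsq] at hlhs
  have := congrArg (· e) (hlhs.unique ((hf.hasFDerivAt.pow 2).add (hg.hasFDerivAt.pow 2)))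
  norm_num at this
  linarith

end SumOfSquares

theorem riemann_invariant_identity {u v δ ux vx δx ut vt δt : ℝ} (hδ : δ ≠ 0)
    (hsq : δ ^ 2 = u ^ 2 + v ^ 2) (hδx : δ * δx = u * ux + v * vx) (hδt : δ * δt = u * ut + v * vt)
    (hut : ut = v * vx) (hvt : vt = v * ux - 2 * u * vx) :
    ut + δt = -(u - δ) * (ux + δx) := by
  refine mul_left_cancel₀ hδ ?_
  linear_combination hδt - ux * hsq + (u - δ) * hδx + (δ + u) * hut + v * hvt

theorem pdt_eq_mul_pdx_of_sq_eq_add_sq {a0 a1 δ r : ℝ × ℝ → ℝ} {z : ℝ × ℝ}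
    (h0 : DifferentiableAt ℝ a0 z) (h1 : DifferentiableAt ℝ a1 z) (hδ : DifferentiableAt ℝ δ z)
    (hδz : δ z ≠ 0) (hsq : ∀ w, δ w ^ 2 = (a0 w - 1) ^ 2 + a1 w ^ 2)
    (heq0 : pdt a0 z = a1 z * pdx a1 z)
    (heq1 : pdt a1 z = a1 z * pdx a0 z + 2 * (1 - a0 z) * pdx a1 z)
    (hr : ∀ w, r w = 1 + ((a0 w - 1) + δ w) / 2) :
    pdt r z = -((a0 z - 1) - δ z) * pdx r z := by
  have hδ' := mul_fderiv_eq_of_sq_eq_add_sq (h0.sub_const 1) h1 hδ hsq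
  rw [fderiv_sub_const] at hδ'
  have hr' : HasFDerivAt r ((2⁻¹ : ℝ) • (fderiv ℝ a0 z + fderiv ℝ δ z)) z := by
    rw [funext hr]
    simpa only [div_eq_mul_inv] using
      (((h0.hasFDerivAt.sub_const 1).fun_add hδ.hasFDerivAt).mul_const (2⁻¹ : ℝ)).const_add 1
  simp only [pdt, pdx, hr'.fderiv, smul_apply, add_apply, smul_eq_mul] at heq0 heq1 ⊢
  have := riemann_invariant_identity hδz (hsq z) (hδ' (1, 0)) (hδ' (0, 1)) heq0
    (by linear_combination heq1)
  linear_combination this / 2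

/-- N = 2: for solutions `(a⁰, a¹)` of the two-component system with `a¹`
nonvanishing, the functions `r¹ = 1 + ((a⁰−1) − D)/2`, `r² = 1 + ((a⁰−1) + D)/2` with
`D = √((a⁰−1)² + (a¹)²) > 0` are Riemann invariants with linearly degenerate diagonal
dynamics `r¹_t = 2(1−r²)r¹_x`, `r²_t = 2(1−r¹)r²_x`; moreover `a⁰ = r¹ + r² − 1` and
`(a¹)² = −4(r¹−1)(r²−1)`. -/
theorem statement7 (Ω : Set (ℝ × ℝ)) (hΩ : IsOpen Ω)
    (a0 a1 : ℝ × ℝ → ℝ)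
    (ha0 : DifferentiableOn ℝ a0 Ω) (ha1 : DifferentiableOn ℝ a1 Ω)
    (hnz : ∀ z ∈ Ω, a1 z ≠ 0)
    (heq0 : ∀ z ∈ Ω, pdt a0 z = a1 z * pdx a1 z)
    (heq1 : ∀ z ∈ Ω, pdt a1 z = a1 z * pdx a0 z + 2 * (1 - a0 z) * pdx a1 z)
    (D r1 r2 : ℝ × ℝ → ℝ)
    (hD : ∀ z, D z = Real.sqrt ((a0 z - 1) ^ 2 + (a1 z) ^ 2))
    (hr1 : ∀ z, r1 z = 1 + ((a0 z - 1) - D z) / 2)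
    (hr2 : ∀ z, r2 z = 1 + ((a0 z - 1) + D z) / 2) :
    ∀ z ∈ Ω,
      0 < D z ∧
      pdt r1 z = 2 * (1 - r2 z) * pdx r1 z ∧
      pdt r2 z = 2 * (1 - r1 z) * pdx r2 z ∧
      a0 z = r1 z + r2 z - 1 ∧
      (a1 z) ^ 2 = -4 * (r1 z - 1) * (r2 z - 1) := by
  intro z hz
  have h0 := (ha0 z hz).differentiableAt (hΩ.mem_nhds hz)
  have h1 := (ha1 z hz).differentiableAt (hΩ.mem_nhds hz)
  have hpos : 0 < (a0 z - 1) ^ 2 + a1 z ^ 2 := by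
    have := hnz z hz
    positivity
  have hDz : 0 < D z := by
    rw [hD z]
    exact Real.sqrt_pos.2 hpos
  have hDdiff : DifferentiableAt ℝ D z := by
    rw [funext hD]
    exact (((h0.sub_const 1).pow 2).add (h1.pow 2)).sqrt hpos.ne'
  have hsq (w : ℝ × ℝ) : D w ^ 2 = (a0 w - 1) ^ 2 + a1 w ^ 2 := by
    rw [hD w]
    exact Real.sq_sqrt (by positivity)
  refine ⟨hDz, ?_, ?_, by rw [hr1, hr2]; ring, by rw [hr1, hr2]; linear_combination -hsq z⟩
  · rw [pdt_eq_mul_pdx_of_sq_eq_add_sq h0 h1 hDdiff.fun_neg (neg_ne_zero.2 hDz.ne')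
      (fun w => by rw [neg_sq, hsq]) (heq0 z hz) (heq1 z hz) (fun w => by rw [hr1]; ring), hr2]
    ring
  · rw [pdt_eq_mul_pdx_of_sq_eq_add_sq h0 h1 hDdiff hDz.ne' hsq (heq0 z hz) (heq1 z hz) hr2, hr1]
    ring
end

section
/- Let r¹, r² : Ω → ℝ be differentiable functions on an open set Ω ⊆ ℝ² satisfying the linearly degenerate diagonal system ∂_t r¹ = 2(1−r²)·∂_x r¹ and ∂_t r² = 2(1−r¹)·∂_x r², and suppose r¹ < 1 < r² on Ω. Define a⁰ := r¹ + r² − 1 and a¹ := 2·√((1−r¹)(r²−1)) (so that (a¹)² = −4(r¹−1)(r²−1) and a¹ > 0). Then (a⁰, a¹) satisfies the two-component system ∂_t a⁰ = a¹·∂_x a¹ and ∂_t a¹ = a¹·∂_x a⁰ + 2(1−a⁰)·∂_x a¹ on Ω. -/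
theorem HasFDerivAt.two_mul_sqrt_mul {E : Type*} [NormedAddCommGroup E] [NormedSpace ℝ E]
    {f g : E → ℝ} {f' g' : E →L[ℝ] ℝ} {z : E}
    (hf : HasFDerivAt f f' z) (hg : HasFDerivAt g g' z) (hfg : 0 < f z * g z) :
    HasFDerivAt (fun w => 2 * √(f w * g w)) ((√(f z * g z))⁻¹ • (f z • g' + g z • f')) z := by
  refine (((Real.hasDerivAt_sqrt hfg.ne').comp_hasFDerivAt z (hf.mul hg)).const_mul 2).congr_fderiv
    ?_
  rw [smul_smul]
  congr 1
  field_simp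

/-- The derivatives of `a⁰`, `a¹` in terms of `p = r¹_x`, `q = r²_x`, `s = √((1 - r¹)(r² - 1))`. -/
theorem two_component_identities {r1 r2 s p q : ℝ} (hs : s ≠ 0)
    (hs2 : s ^ 2 = (1 - r1) * (r2 - 1)) :
    2 * (1 - r2) * p + 2 * (1 - r1) * q
        = 2 * s * (s⁻¹ * ((1 - r1) * q + (r2 - 1) * -p)) ∧
      s⁻¹ * ((1 - r1) * (2 * (1 - r1) * q) + (r2 - 1) * -(2 * (1 - r2) * p))
        = 2 * s * (p + q) + 2 * (1 - (r1 + r2 - 1)) * (s⁻¹ * ((1 - r1) * q + (r2 - 1) * -p)) := by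
  constructor
  · field_simp
    ring
  · field_simp
    linear_combination (-(p + q)) * hs2

/-- solutions `r¹ < 1 < r²` of the linearly degenerate diagonal system
`r¹_t = 2(1−r²)r¹_x`, `r²_t = 2(1−r¹)r²_x` yield, via `a⁰ = r¹ + r² − 1` and
`a¹ = 2√((1−r¹)(r²−1))` (so that `(a¹)² = −4(r¹−1)(r²−1)` and `a¹ > 0`), a solution of
the two-component system `a⁰_t = a¹a¹_x`, `a¹_t = a¹a⁰_x + 2(1−a⁰)a¹_x`. -/
theorem statement8 (Ω : Set (ℝ × ℝ)) (hΩ : IsOpen Ω)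
    (r1 r2 : ℝ × ℝ → ℝ)
    (hr1 : DifferentiableOn ℝ r1 Ω) (hr2 : DifferentiableOn ℝ r2 Ω)
    (horder : ∀ z ∈ Ω, r1 z < 1 ∧ 1 < r2 z)
    (heq1 : ∀ z ∈ Ω, pdt r1 z = 2 * (1 - r2 z) * pdx r1 z)
    (heq2 : ∀ z ∈ Ω, pdt r2 z = 2 * (1 - r1 z) * pdx r2 z)
    (a0 a1 : ℝ × ℝ → ℝ)
    (ha0 : ∀ z, a0 z = r1 z + r2 z - 1)
    (ha1 : ∀ z, a1 z = 2 * Real.sqrt ((1 - r1 z) * (r2 z - 1))) :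
    ∀ z ∈ Ω,
      (a1 z) ^ 2 = -4 * (r1 z - 1) * (r2 z - 1) ∧
      0 < a1 z ∧
      pdt a0 z = a1 z * pdx a1 z ∧
      pdt a1 z = a1 z * pdx a0 z + 2 * (1 - a0 z) * pdx a1 z := by
  intro z hz
  obtain ⟨hr1z, hr2z⟩ := horder z hz
  have hpos : 0 < (1 - r1 z) * (r2 z - 1) := mul_pos (by linarith) (by linarith)
  set s := √((1 - r1 z) * (r2 z - 1))
  have hs : 0 < s := Real.sqrt_pos.2 hpos
  have hs2 : s ^ 2 = (1 - r1 z) * (r2 z - 1) := Real.sq_sqrt hpos.le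
  have ha1z : a1 z = 2 * s := ha1 z
  have hD1 := ((hr1 z hz).differentiableAt (hΩ.mem_nhds hz)).hasFDerivAt
  have hD2 := ((hr2 z hz).differentiableAt (hΩ.mem_nhds hz)).hasFDerivAt
  have hA0 : HasFDerivAt a0 (fderiv ℝ r1 z + fderiv ℝ r2 z) z := by
    rw [funext ha0]
    exact (hD1.add hD2).sub_const 1
  have hA1 : HasFDerivAt a1
      (s⁻¹ • ((1 - r1 z) • fderiv ℝ r2 z + (r2 z - 1) • -fderiv ℝ r1 z)) z := by
    rw [funext ha1]
    exact (hD1.const_sub 1).two_mul_sqrt_mul (hD2.sub_const 1) hpos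
  have h1 : fderiv ℝ r1 z (0, 1) = 2 * (1 - r2 z) * fderiv ℝ r1 z (1, 0) := heq1 z hz
  have h2 : fderiv ℝ r2 z (0, 1) = 2 * (1 - r1 z) * fderiv ℝ r2 z (1, 0) := heq2 z hz
  obtain ⟨hx, ht⟩ := two_component_identities (p := fderiv ℝ r1 z (1, 0))
    (q := fderiv ℝ r2 z (1, 0)) hs.ne' hs2
  refine ⟨by rw [ha1z]; linear_combination 4 * hs2, by rw [ha1z]; positivity, ?_, ?_⟩ <;>
    simp only [pdx, pdt, hA0.fderiv, hA1.fderiv, add_apply, smul_apply, neg_apply, smul_eq_mul,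
      h1, h2, ha1z, ha0 z]
  exacts [hx, ht]
end

section
/- Let β, γ : ℝ → ℝ be twice differentiable, and let u, v : Ω → ℝ be differentiable functions on an open set Ω ⊆ ℝ² with coordinates (x,t) satisfying the implicit relations t = β′(u(x,t)) + γ′(v(x,t)) and x = β(u(x,t)) − u(x,t)·β′(u(x,t)) + γ(v(x,t)) − v(x,t)·γ′(v(x,t)) at every point of Ω. Assume moreover that β″(u(x,t)) ≠ 0, γ″(v(x,t)) ≠ 0, and u(x,t) ≠ v(x,t) on Ω. Then u and v solve the linearly degenerate system ∂_t u = v·∂_x u and ∂_t v = u·∂_x v on Ω. -/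
open Filter Topology ContinuousLinearMap

theorem hasDerivAt_sub_mul_deriv {𝕜 : Type*} [NontriviallyNormedField 𝕜] {f : 𝕜 → 𝕜} {s : 𝕜}
    (hf : DifferentiableAt 𝕜 f s) (hf' : DifferentiableAt 𝕜 (deriv f) s) :
    HasDerivAt (fun r => f r - r * deriv f r) (-(s * deriv (deriv f) s)) s := by
  refine (hf.hasDerivAt.sub ((hasDerivAt_id' s).mul hf'.hasDerivAt)).congr_deriv ?_
  ring

theorem pdt_eq_mul_pdx_of_smul_fderiv_eq {f : ℝ × ℝ → ℝ} {z : ℝ × ℝ} {b c : ℝ} (hc : c ≠ 0)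
    (h : c • fderiv ℝ f z = fst ℝ ℝ ℝ + b • snd ℝ ℝ ℝ) : pdt f z = b * pdx f z := by
  have hx : c * pdx f z = 1 := by simpa [pdx] using congr($h (1, 0))
  have ht : c * pdt f z = b := by simpa [pdt] using congr($h (0, 1))
  apply mul_left_cancel₀ hc
  linear_combination ht - b * hx

section ImplicitRelations

variable {β γ : ℝ → ℝ} {u v : ℝ × ℝ → ℝ} {z : ℝ × ℝ}

theorem fderiv_relation_t (hβ' : DifferentiableAt ℝ (deriv β) (u z))
    (hγ' : DifferentiableAt ℝ (deriv γ) (v z))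
    (hu : DifferentiableAt ℝ u z) (hv : DifferentiableAt ℝ v z)
    (hrel : ∀ᶠ w in 𝓝 z, w.2 = deriv β (u w) + deriv γ (v w)) :
    deriv (deriv β) (u z) • fderiv ℝ u z + deriv (deriv γ) (v z) • fderiv ℝ v z =
      snd ℝ ℝ ℝ := by
  have hdiff := (hβ'.hasDerivAt.comp_hasFDerivAt z hu.hasFDerivAt).add
    (hγ'.hasDerivAt.comp_hasFDerivAt z hv.hasFDerivAt)
  exact hdiff.unique (hasFDerivAt_snd.congr_of_eventuallyEq (hrel.mono fun _ hw => hw.symm))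

theorem fderiv_relation_x (hβ : DifferentiableAt ℝ β (u z))
    (hβ' : DifferentiableAt ℝ (deriv β) (u z))
    (hγ : DifferentiableAt ℝ γ (v z)) (hγ' : DifferentiableAt ℝ (deriv γ) (v z))
    (hu : DifferentiableAt ℝ u z) (hv : DifferentiableAt ℝ v z)
    (hrel : ∀ᶠ w in 𝓝 z,
      w.1 = β (u w) - u w * deriv β (u w) + γ (v w) - v w * deriv γ (v w)) :
    (u z * deriv (deriv β) (u z)) • fderiv ℝ u z +
      (v z * deriv (deriv γ) (v z)) • fderiv ℝ v z = -fst ℝ ℝ ℝ := by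
  have hdiff :=
    ((hasDerivAt_sub_mul_deriv hβ hβ').comp_hasFDerivAt z hu.hasFDerivAt).add
      ((hasDerivAt_sub_mul_deriv hγ hγ').comp_hasFDerivAt z hv.hasFDerivAt)
  have hfst := hdiff.unique <| hasFDerivAt_fst.congr_of_eventuallyEq <|
    hrel.mono fun w hw => by simp only [Pi.add_apply, Function.comp_apply, hw]; ring
  rw [← neg_eq_iff_eq_neg, ← hfst]
  module

end ImplicitRelations

/-- the implicit formulas `t = β′(u) + γ′(v)`,
`x = β(u) − uβ′(u) + γ(v) − vγ′(v)` (with `β″(u) ≠ 0`, `γ″(v) ≠ 0`, `u ≠ v`) give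
solutions of the linearly degenerate system `u_t = v·u_x`, `v_t = u·v_x`. -/
theorem statement9 (β γ : ℝ → ℝ)
    (hβ : Differentiable ℝ β) (hβ' : Differentiable ℝ (deriv β))
    (hγ : Differentiable ℝ γ) (hγ' : Differentiable ℝ (deriv γ))
    (Ω : Set (ℝ × ℝ)) (hΩ : IsOpen Ω)
    (u v : ℝ × ℝ → ℝ)
    (hu : DifferentiableOn ℝ u Ω) (hv : DifferentiableOn ℝ v Ω)
    (hrel_t : ∀ z ∈ Ω, z.2 = deriv β (u z) + deriv γ (v z))
    (hrel_x : ∀ z ∈ Ω,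
      z.1 = β (u z) - u z * deriv β (u z) + γ (v z) - v z * deriv γ (v z))
    (hβ'' : ∀ z ∈ Ω, deriv (deriv β) (u z) ≠ 0)
    (hγ'' : ∀ z ∈ Ω, deriv (deriv γ) (v z) ≠ 0)
    (huv : ∀ z ∈ Ω, u z ≠ v z) :
    ∀ z ∈ Ω, pdt u z = v z * pdx u z ∧ pdt v z = u z * pdx v z := by
  intro z hz
  have hΩz : Ω ∈ 𝓝 z := hΩ.mem_nhds hz
  have huz := (hu z hz).differentiableAt hΩz
  have hvz := (hv z hz).differentiableAt hΩz
  have ht := fderiv_relation_t (hβ' _) (hγ' _) huz hvz (eventually_of_mem hΩz hrel_t)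
  have hx := fderiv_relation_x (hβ _) (hβ' _) (hγ _) (hγ' _) huz hvz
    (eventually_of_mem hΩz hrel_x)
  constructor
  · refine pdt_eq_mul_pdx_of_smul_fderiv_eq (c := (v z - u z) * deriv (deriv β) (u z))
      (mul_ne_zero (sub_ne_zero.mpr (huv z hz).symm) (hβ'' z hz)) ?_
    linear_combination (norm := module) v z • ht - hx
  · refine pdt_eq_mul_pdx_of_smul_fderiv_eq (c := (u z - v z) * deriv (deriv γ) (v z))
      (mul_ne_zero (sub_ne_zero.mpr (huv z hz)) (hγ'' z hz)) ?_
    linear_combination (norm := module) u z • ht - hx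
end

section
/- Let N ≥ 2 and let b¹,…,b^N : Ω → ℝ be differentiable functions on an open set Ω ⊆ ℝ². Define h^k := −b^k/√(1+(b^k)²), so each h^k takes values in (−1,1) and b^k = −h^k/√(1−(h^k)²). Then the b^k satisfy system (B) if and only if the h^k satisfy the symmetric conservative system ∂_t h^k = ∂_x( √(1−(h^k)²) · Σ_{m=1}^{N} h^m/√(1−(h^m)²) ) for k = 1,…,N. -/
/-! Writing `σ(u) = √(1 + u²)`, the substitution `h = -b/σ(b)` gives `√(1 - h²) = 1/σ(b)` and
`h/√(1 - h²) = -b`, so `h^k = -b^k/σ(b^k)` and the flux is `-(Σ b^m)/σ(b^k)`. Both sides of the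
conservative system are then derivatives of quotients `p/σ(b^k)`, whose derivative is
`((1 + (b^k)²) dp - p b^k db^k)/σ(b^k)³`; clearing the common positive factor `σ(b^k)³` turns
`∂_t h^k = ∂_x(flux)` into the `k`-th equation of system (B). -/

open Real

/-- System (B): the symmetric form of the hydrodynamic type system in the root
variables `b¹, …, b^N`. -/
def SystemB (N : ℕ) (Ω : Set (ℝ × ℝ)) (b : Fin N → ℝ × ℝ → ℝ) : Prop :=
  ∀ z ∈ Ω, ∀ k,
    pdt (b k) z =
      (1 + (b k z) ^ 2) * ∑ m, pdx (b m) z - (∑ n, b n z) * b k z * pdx (b k) z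

lemma neg_div_sqrt_one_add_sq_mem_Ioo (u : ℝ) : -u / √(1 + u ^ 2) ∈ Set.Ioo (-1 : ℝ) 1 := by
  have hσ : 0 < √(1 + u ^ 2) := sqrt_pos.2 (by positivity)
  have hu : |u| < √(1 + u ^ 2) := (lt_sqrt (abs_nonneg u)).2 (by rw [sq_abs]; linarith)
  rw [Set.mem_Ioo, ← abs_lt, abs_div, abs_neg, abs_of_pos hσ, div_lt_one hσ]
  exact hu

lemma sqrt_one_sub_sq_neg_div_sqrt_one_add_sq (u : ℝ) :
    √(1 - (-u / √(1 + u ^ 2)) ^ 2) = (√(1 + u ^ 2))⁻¹ := by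
  have hpos : 0 < 1 + u ^ 2 := by positivity
  rw [← sqrt_inv, div_pow, neg_sq, sq_sqrt hpos.le]
  congr 1
  field_simp
  ring

lemma neg_div_sqrt_one_add_sq_div_sqrt_one_sub_sq (u : ℝ) :
    -u / √(1 + u ^ 2) / √(1 - (-u / √(1 + u ^ 2)) ^ 2) = -u := by
  rw [sqrt_one_sub_sq_neg_div_sqrt_one_add_sq, div_inv_eq_mul,
    div_mul_cancel₀ _ (sqrt_pos.2 (by positivity)).ne']

section Derivatives

variable {E : Type*} [NormedAddCommGroup E] [NormedSpace ℝ E]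

lemma fderiv_div_sqrt_one_add_sq_apply {p f : E → ℝ} {z : E} (hp : DifferentiableAt ℝ p z)
    (hf : DifferentiableAt ℝ f z) (v : E) :
    fderiv ℝ (fun w => p w / √(1 + f w ^ 2)) z v =
      ((1 + f z ^ 2) * fderiv ℝ p z v - p z * f z * fderiv ℝ f z v) / √(1 + f z ^ 2) ^ 3 := by
  have hpos : 0 < 1 + f z ^ 2 := by positivity
  have hσ : HasDerivAt (fun u : ℝ => (√(1 + u ^ 2))⁻¹) _ (f z) :=
    (((hasDerivAt_pow 2 (f z)).const_add 1).sqrt hpos.ne').inv (sqrt_pos.2 hpos).ne'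
  have hquot := hp.hasFDerivAt.fun_mul (hσ.comp_hasFDerivAt z hf.hasFDerivAt)
  simp only [← div_eq_mul_inv, Function.comp_apply] at hquot
  rw [hquot.fderiv]
  simp only [Nat.cast_ofNat, Nat.add_one_sub_one, pow_one, add_apply, smul_apply, smul_eq_mul]
  field_simp
  rw [sq_sqrt hpos.le]
  ring

lemma fderiv_neg_div_sqrt_eq_fderiv_flux_iff {ι : Type*} [Fintype ι] {b : ι → E → ℝ} {z : E}
    (hb : ∀ m, DifferentiableAt ℝ (b m) z) (k : ι) (t x : E) :
    fderiv ℝ (fun w => -b k w / √(1 + b k w ^ 2)) z t =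
        fderiv ℝ (fun w => -(∑ m, b m w) / √(1 + b k w ^ 2)) z x ↔
      fderiv ℝ (b k) z t =
        (1 + b k z ^ 2) * ∑ m, fderiv ℝ (b m) z x - (∑ m, b m z) * b k z * fderiv ℝ (b k) z x := by
  have hsum : DifferentiableAt ℝ (fun w => ∑ m, b m w) z := by fun_prop
  rw [fderiv_div_sqrt_one_add_sq_apply (p := fun w => -b k w) (hb k).neg (hb k),
    fderiv_div_sqrt_one_add_sq_apply (p := fun w => -∑ m, b m w) hsum.neg (hb k),
    fderiv_fun_neg, fderiv_fun_neg, fderiv_fun_sum fun m _ => hb m,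
    div_left_inj' (by positivity)]
  simp only [neg_apply, sum_apply]
  constructor <;> intro h <;> linear_combination -h

end Derivatives

theorem statement12_general (N : ℕ) (Ω : Set (ℝ × ℝ)) (hΩ : IsOpen Ω)
    (b : Fin N → ℝ × ℝ → ℝ)
    (hb : ∀ k, DifferentiableOn ℝ (b k) Ω)
    (h : Fin N → ℝ × ℝ → ℝ)
    (hh : ∀ k z, h k z = -(b k z) / Real.sqrt (1 + (b k z) ^ 2)) :
    (∀ k z, h k z ∈ Set.Ioo (-1 : ℝ) 1) ∧
    (∀ k z, b k z = -(h k z) / Real.sqrt (1 - (h k z) ^ 2)) ∧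
    (SystemB N Ω b ↔
      ∀ z ∈ Ω, ∀ k,
        pdt (h k) z =
          pdx (fun w =>
            Real.sqrt (1 - (h k w) ^ 2) *
              ∑ m, h m w / Real.sqrt (1 - (h m w) ^ 2)) z) := by
  obtain rfl : h = fun k z => -(b k z) / √(1 + b k z ^ 2) := funext fun k => funext (hh k)
  refine ⟨fun k z => neg_div_sqrt_one_add_sq_mem_Ioo (b k z), fun k z => ?_, ?_⟩
  · rw [neg_div, neg_div_sqrt_one_add_sq_div_sqrt_one_sub_sq, neg_neg]
  · have hflux : ∀ k, (fun w => √(1 - (-b k w / √(1 + b k w ^ 2)) ^ 2) *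
          ∑ m, -b m w / √(1 + b m w ^ 2) / √(1 - (-b m w / √(1 + b m w ^ 2)) ^ 2)) =
        fun w => -(∑ m, b m w) / √(1 + b k w ^ 2) := by
      intro k
      funext w
      simp_rw [neg_div_sqrt_one_add_sq_div_sqrt_one_sub_sq, sqrt_one_sub_sq_neg_div_sqrt_one_add_sq,
        Finset.sum_neg_distrib, inv_mul_eq_div]
    simp only [hflux]
    refine forall₂_congr fun z hz => forall_congr' fun k => ?_
    exact (fderiv_neg_div_sqrt_eq_fderiv_flux_iff
      (fun m => (hb m z hz).differentiableAt (hΩ.mem_nhds hz)) k _ _).symm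

/-- with `h^k = −b^k/√(1+(b^k)²)` (values in `(−1,1)`, and
`b^k = −h^k/√(1−(h^k)²)`), the `b^k` satisfy system (B) if and only if the `h^k`
satisfy the symmetric conservative system
`∂_t h^k = ∂_x(√(1−(h^k)²)·Σ_m h^m/√(1−(h^m)²))`. -/
theorem statement12 (N : ℕ) (hN : 2 ≤ N) (Ω : Set (ℝ × ℝ)) (hΩ : IsOpen Ω)
    (b : Fin N → ℝ × ℝ → ℝ)
    (hb : ∀ k, DifferentiableOn ℝ (b k) Ω)
    (h : Fin N → ℝ × ℝ → ℝ)
    (hh : ∀ k z, h k z = -(b k z) / Real.sqrt (1 + (b k z) ^ 2)) :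
    (∀ k z, h k z ∈ Set.Ioo (-1 : ℝ) 1) ∧
    (∀ k z, b k z = -(h k z) / Real.sqrt (1 - (h k z) ^ 2)) ∧
    (SystemB N Ω b ↔
      ∀ z ∈ Ω, ∀ k,
        pdt (h k) z =
          pdx (fun w =>
            Real.sqrt (1 - (h k w) ^ 2) *
              ∑ m, h m w / Real.sqrt (1 - (h m w) ^ 2)) z) :=
  statement12_general N Ω hΩ b hb h hh
end

section
/- Let N ≥ 2 and let b¹,…,b^N : Ω → ℝ be differentiable functions on an open set Ω ⊆ ℝ², pairwise distinct at every point, satisfying system (B). Fix k ∈ {1,…,N} and define p₁^{(k)} := −(1+(b^k)²)^{(N−3)/2} / ∏_{m≠k}(b^k − b^m). Then p₁^{(k)} is a conservation law density with the conservation law ∂_t p₁^{(k)} = ∂_x( −b^k · p₁^{(k)} · Σ_{n=1}^{N} b^n ) on Ω. -/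
open Finset

section LogarithmicDerivative

variable {E : Type*} [NormedAddCommGroup E] [NormedSpace ℝ E] {z : E}

theorem HasFDerivAt.finsetProd_eq_smul_sum {ι : Type*} [DecidableEq ι] {s : Finset ι}
    {f : ι → E → ℝ} {f' : ι → E →L[ℝ] ℝ} (hf : ∀ i ∈ s, HasFDerivAt (f i) (f' i) z)
    (hne : ∀ i ∈ s, f i z ≠ 0) :
    HasFDerivAt (∏ i ∈ s, f i ·) ((∏ i ∈ s, f i z) • ∑ i ∈ s, (f i z)⁻¹ • f' i) z := by
  refine (HasFDerivAt.finsetProd hf).congr_fderiv ?_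
  rw [Finset.smul_sum]
  refine Finset.sum_congr rfl fun i hi => ?_
  rw [smul_smul, ← Finset.prod_erase_mul s _ hi, mul_assoc, mul_inv_cancel₀ (hne i hi), mul_one]

theorem HasFDerivAt.rpow_const_eq_smul {u : E → ℝ} {u' : E →L[ℝ] ℝ} (hu : HasFDerivAt u u' z)
    (hu0 : u z ≠ 0) (α : ℝ) :
    HasFDerivAt (fun w => u w ^ α) (u z ^ α • (α / u z) • u') z := by
  refine (hu.rpow_const (Or.inl hu0)).congr_fderiv ?_
  rw [smul_smul, Real.rpow_sub_one hu0]
  ring_nf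

theorem HasFDerivAt.div_eq_smul_sub {f g : E → ℝ} {F G : E →L[ℝ] ℝ}
    (hf : HasFDerivAt f (f z • F) z) (hg : HasFDerivAt g (g z • G) z) (hg0 : g z ≠ 0) :
    HasFDerivAt (fun w => f w / g w) ((f z / g z) • (F - G)) z := by
  refine (hf.mul ((hasDerivAt_inv hg0).comp_hasFDerivAt z hg)).congr_fderiv ?_
  ext v
  simp only [neg_smul, smul_neg, Function.comp_apply, add_apply, neg_apply, smul_apply, smul_eq_mul,
    sub_apply]
  field_simp
  ring

end LogarithmicDerivative

section RootDensity

variable {ι : Type*} [Fintype ι] [DecidableEq ι]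

noncomputable def rootDensity (α : ℝ) (k : ι) (x : ι → ℝ) : ℝ :=
  -((1 + x k ^ 2) ^ α) / ∏ m ∈ univ.erase k, (x k - x m)

/-- The variations `y` may be real numbers or whole derivatives `E →L[ℝ] ℝ`; see
`rootDensityLogDeriv_apply`. -/
noncomputable def rootDensityLogDeriv {M : Type*} [AddCommGroup M] [Module ℝ M]
    (α : ℝ) (k : ι) (x : ι → ℝ) (y : ι → M) : M :=
  (2 * α * x k / (1 + x k ^ 2)) • y k - ∑ m ∈ univ.erase k, (x k - x m)⁻¹ • (y k - y m)

theorem rootDensityLogDeriv_apply {E : Type*} [NormedAddCommGroup E] [NormedSpace ℝ E]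
    (α : ℝ) (k : ι) (x : ι → ℝ) (L : ι → E →L[ℝ] ℝ) (v : E) :
    rootDensityLogDeriv α k x L v = rootDensityLogDeriv α k x (fun i => L i v) := by
  simp [rootDensityLogDeriv]

theorem hasFDerivAt_rootDensity {E : Type*} [NormedAddCommGroup E] [NormedSpace ℝ E]
    {b : ι → E → ℝ} {b' : ι → E →L[ℝ] ℝ} {z : E} (hb : ∀ i, HasFDerivAt (b i) (b' i) z)
    {k : ι} (hdist : ∀ m ≠ k, b k z ≠ b m z) (α : ℝ) :
    HasFDerivAt (fun w => rootDensity α k (b · w))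
      (rootDensity α k (b · z) • rootDensityLogDeriv α k (b · z) b') z := by
  have hu0 : 1 + b k z ^ 2 ≠ 0 := by positivity
  have hnum : HasFDerivAt (fun w => -((1 + b k w ^ 2) ^ α))
      (-((1 + b k z ^ 2) ^ α) • (2 * α * b k z / (1 + b k z ^ 2)) • b' k) z := by
    refine ((((hb k).pow 2).const_add 1).rpow_const_eq_smul hu0 α).neg.congr_fderiv ?_
    ext v
    simp only [neg_apply, smul_apply, smul_eq_mul]
    field_simp
    ring
  have hden := HasFDerivAt.finsetProd_eq_smul_sum (s := univ.erase k)
    (fun m _ => (hb k).sub (hb m)) (fun m hm => sub_ne_zero.2 (hdist m (ne_of_mem_erase hm)))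
  exact hnum.div_eq_smul_sub hden
    (prod_ne_zero_iff.2 fun m hm => sub_ne_zero.2 (hdist m (ne_of_mem_erase hm)))

theorem rootDensityLogDeriv_systemB (k : ι) (x β : ι → ℝ) (hx : ∀ m ≠ k, x k ≠ x m) :
    rootDensityLogDeriv (((Fintype.card ι : ℝ) - 3) / 2) k x
        (fun m => (1 + x m ^ 2) * ∑ n, β n - (∑ n, x n) * x m * β m) =
      -(β k * ∑ n, x n + x k * ∑ n, β n +
        x k * (∑ n, x n) * rootDensityLogDeriv (((Fintype.card ι : ℝ) - 3) / 2) k x β) := by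
  have hterm : ∀ m ∈ univ.erase k,
      (x k - x m)⁻¹ • ((1 + x k ^ 2) * ∑ n, β n - (∑ n, x n) * x k * β k -
          ((1 + x m ^ 2) * ∑ n, β n - (∑ n, x n) * x m * β m)) =
        (x k + x m) * ∑ n, β n - (∑ n, x n) * β m -
          (∑ n, x n) * x k * ((x k - x m)⁻¹ • (β k - β m)) := by
    intro m hm
    have := sub_ne_zero.2 (hx m (ne_of_mem_erase hm))
    simp only [smul_eq_mul]
    field_simp
    ring
  have hcard : ((#(univ.erase k) : ℕ) : ℝ) = Fintype.card ι - 1 := by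
    rw [card_erase_of_mem (mem_univ k), card_univ, Nat.cast_sub (Fintype.card_pos_iff.2 ⟨k⟩)]
    simp
  unfold rootDensityLogDeriv
  rw [sum_congr rfl hterm, sum_sub_distrib, sum_sub_distrib, ← mul_sum, ← mul_sum, ← sum_mul,
    sum_add_distrib, sum_const, nsmul_eq_mul, hcard, sum_erase_eq_sub (mem_univ k),
    sum_erase_eq_sub (mem_univ k)]
  simp only [smul_eq_mul]
  field_simp
  ring

end RootDensity

theorem statement13_general (N : ℕ) (Ω : Set (ℝ × ℝ)) (hΩ : IsOpen Ω)
    (b : Fin N → ℝ × ℝ → ℝ)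
    (hb : ∀ k, DifferentiableOn ℝ (b k) Ω)
    (hdist : ∀ z ∈ Ω, ∀ i j, i ≠ j → b i z ≠ b j z)
    (hB : SystemB N Ω b)
    (k : Fin N)
    (p1 : ℝ × ℝ → ℝ)
    (hp1 : ∀ z, p1 z =
      -((1 + (b k z) ^ 2) ^ (((N : ℝ) - 3) / 2)) /
        ∏ m ∈ Finset.univ.erase k, (b k z - b m z)) :
    ∀ z ∈ Ω,
      pdt p1 z = pdx (fun w => -(b k w) * p1 w * ∑ n, b n w) z := by
  intro z hz
  have hb' (m : Fin N) : HasFDerivAt (b m) (fderiv ℝ (b m) z) z :=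
    ((hb m z hz).differentiableAt (hΩ.mem_nhds hz)).hasFDerivAt
  have hdensity :=
    hasFDerivAt_rootDensity hb' (fun m hm => hdist z hz k m hm.symm) (((N : ℝ) - 3) / 2)
  rw [← show p1 = fun w => rootDensity (((N : ℝ) - 3) / 2) k (b · w) from funext hp1] at hdensity
  have hflux := ((hb' k).fun_neg.fun_mul hdensity).fun_mul
    (HasFDerivAt.fun_sum (u := univ) fun n _ => hb' n)
  have hτ : (fun m => pdt (b m) z) = fun m =>
      (1 + b m z ^ 2) * ∑ n, pdx (b n) z - (∑ n, b n z) * b m z * pdx (b m) z :=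
    funext (hB z hz)
  unfold pdt pdx at hτ ⊢
  rw [hdensity.fderiv, hflux.fderiv,
    show p1 z = rootDensity (((N : ℝ) - 3) / 2) k (b · z) from hp1 z]
  simp only [smul_apply, rootDensityLogDeriv_apply, hτ, smul_eq_mul, neg_mul, neg_smul, smul_neg,
    smul_add, add_apply, neg_apply, _root_.sum_apply]
  have hlog := rootDensityLogDeriv_systemB k (b · z) (fun m => fderiv ℝ (b m) z (1, 0))
    (fun m hm => hdist z hz k m hm.symm)
  rw [Fintype.card_fin] at hlog
  rw [hlog]
  ring

/-- for pairwise distinct solutions of system (B), each density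
`p₁^{(k)} = −(1+(b^k)²)^{(N−3)/2} / ∏_{m≠k}(b^k − b^m)` satisfies the conservation law
`∂_t p₁^{(k)} = ∂_x(−b^k·p₁^{(k)}·Σ_n b^n)`. -/
theorem statement13 (N : ℕ) (hN : 2 ≤ N) (Ω : Set (ℝ × ℝ)) (hΩ : IsOpen Ω)
    (b : Fin N → ℝ × ℝ → ℝ)
    (hb : ∀ k, DifferentiableOn ℝ (b k) Ω)
    (hdist : ∀ z ∈ Ω, ∀ i j, i ≠ j → b i z ≠ b j z)
    (hB : SystemB N Ω b)
    (k : Fin N)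
    (p1 : ℝ × ℝ → ℝ)
    (hp1 : ∀ z, p1 z =
      -((1 + (b k z) ^ 2) ^ (((N : ℝ) - 3) / 2)) /
        ∏ m ∈ Finset.univ.erase k, (b k z - b m z)) :
    ∀ z ∈ Ω,
      pdt p1 z = pdx (fun w => -(b k w) * p1 w * ∑ n, b n w) z :=
  statement13_general N Ω hΩ b hb hdist hB k p1 hp1
end

section
/- Let N ≥ 2 and let b¹,…,b^N : Ω → ℝ be differentiable functions on an open set Ω ⊆ ℝ² satisfying system (B). Define the moments B^j := (1/(j+1))·Σ_{m=1}^{N} (b^m)^{j+1} for j ≥ 0. Then the moments satisfy the hydrodynamic chain: ∂_t B⁰ = (N + 2B¹)·∂_x B⁰ − B⁰·∂_x B¹, and for every k ≥ 1, ∂_t B^k = (k·B^{k−1} + (k+2)·B^{k+1})·∂_x B⁰ − B⁰·∂_x B^{k+1}. -/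
/-- The moments `B^j = (1/(j+1))·Σ_m (b^m)^{j+1}`. -/
noncomputable def moment (N : ℕ) (b : Fin N → ℝ × ℝ → ℝ) (j : ℕ) (z : ℝ × ℝ) : ℝ :=
  (1 / ((j : ℝ) + 1)) * ∑ m, (b m z) ^ (j + 1)

/-!
Differentiating `B^j` gives `∂B^j = Σ_m (b^m)^j ∂b^m`. Substituting system (B) into the
`t`-derivative splits it into `(Σ_m (b^m)^j + Σ_m (b^m)^{j+2}) ∂_x B⁰ − B⁰ ∂_x B^{j+1}`, and the
two power sums are `N` and `2B¹` for `j = 0`, and `k B^{k-1}` and `(k+2) B^{k+1}` for `j = k ≥ 1`.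
-/

section Moments

variable {N : ℕ} {b : Fin N → ℝ × ℝ → ℝ} {z : ℝ × ℝ}

lemma sum_pow_eq_mul_moment (j : ℕ) :
    ∑ m, (b m z) ^ (j + 1) = ((j : ℝ) + 1) * moment N b j z := by
  rw [moment, ← mul_assoc, mul_one_div_cancel (by positivity), one_mul]

lemma moment_zero_apply : moment N b 0 z = ∑ m, b m z := by
  simp [moment]

lemma hasFDerivAt_moment (hb : ∀ m, DifferentiableAt ℝ (b m) z) (j : ℕ) :
    HasFDerivAt (moment N b j) (∑ m, (b m z) ^ j • fderiv ℝ (b m) z) z := by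
  have hsum : HasFDerivAt (fun w ↦ ∑ m, (b m w) ^ (j + 1))
      (∑ m, ((j + 1) • (b m z) ^ j) • fderiv ℝ (b m) z) z :=
    HasFDerivAt.fun_sum fun m _ ↦ by simpa using (hb m).hasFDerivAt.pow (j + 1)
  refine (hsum.const_mul (1 / ((j : ℝ) + 1))).congr_fderiv ?_
  rw [Finset.smul_sum]
  refine Finset.sum_congr rfl fun m _ ↦ ?_
  rw [smul_smul, nsmul_eq_mul, ← mul_assoc, Nat.cast_succ, one_div_mul_cancel (by positivity),
    one_mul]

lemma fderiv_moment_apply (hb : ∀ m, DifferentiableAt ℝ (b m) z) (j : ℕ) (v : ℝ × ℝ) :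
    fderiv ℝ (moment N b j) z v = ∑ m, (b m z) ^ j * fderiv ℝ (b m) z v := by
  simp [(hasFDerivAt_moment hb j).fderiv]

lemma pdt_moment_of_systemB {Ω : Set (ℝ × ℝ)} (hB : SystemB N Ω b) (hz : z ∈ Ω)
    (hb : ∀ m, DifferentiableAt ℝ (b m) z) (j : ℕ) :
    pdt (moment N b j) z =
      (∑ m, (b m z) ^ j + ∑ m, (b m z) ^ (j + 2)) * pdx (moment N b 0) z -
        moment N b 0 z * pdx (moment N b (j + 1)) z := by
  have hpdx : ∀ i, pdx (moment N b i) z = ∑ m, (b m z) ^ i * pdx (b m) z :=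
    fun i ↦ fderiv_moment_apply hb i (1, 0)
  calc pdt (moment N b j) z
      = ∑ m, (b m z) ^ j * pdt (b m) z := fderiv_moment_apply hb j (0, 1)
    _ = ∑ m, (((b m z) ^ j + (b m z) ^ (j + 2)) * ∑ n, pdx (b n) z -
          (∑ n, b n z) * ((b m z) ^ (j + 1) * pdx (b m) z)) := by
        refine Finset.sum_congr rfl fun m _ ↦ ?_
        rw [hB z hz m]
        ring
    _ = _ := by
        rw [Finset.sum_sub_distrib, ← Finset.sum_mul, Finset.sum_add_distrib, ← Finset.mul_sum,
          hpdx, hpdx, moment_zero_apply]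
        simp

end Moments

theorem statement14_general (N : ℕ) (Ω : Set (ℝ × ℝ)) (hΩ : IsOpen Ω)
    (b : Fin N → ℝ × ℝ → ℝ)
    (hb : ∀ k, DifferentiableOn ℝ (b k) Ω)
    (hB : SystemB N Ω b) :
    ∀ z ∈ Ω,
      (pdt (moment N b 0) z =
        ((N : ℝ) + 2 * moment N b 1 z) * pdx (moment N b 0) z -
          moment N b 0 z * pdx (moment N b 1) z) ∧
      ∀ k : ℕ, 1 ≤ k →
        pdt (moment N b k) z =
          ((k : ℝ) * moment N b (k - 1) z + ((k : ℝ) + 2) * moment N b (k + 1) z) *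
              pdx (moment N b 0) z -
            moment N b 0 z * pdx (moment N b (k + 1)) z := by
  intro z hz
  have hbz : ∀ m, DifferentiableAt ℝ (b m) z :=
    fun m ↦ (hb m).differentiableAt (hΩ.mem_nhds hz)
  have chain := pdt_moment_of_systemB hB hz hbz
  refine ⟨?_, fun k hk ↦ ?_⟩
  · rw [chain 0, sum_pow_eq_mul_moment 1]
    norm_num
  · obtain ⟨j, rfl⟩ := Nat.exists_eq_add_of_le' hk
    rw [chain (j + 1), sum_pow_eq_mul_moment j, sum_pow_eq_mul_moment (j + 2)]
    push_cast
    ring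

/-- for solutions of system (B), the moments satisfy the hydrodynamic
chain `∂_t B⁰ = (N + 2B¹)∂_x B⁰ − B⁰∂_x B¹` and, for `k ≥ 1`,
`∂_t B^k = (kB^{k−1} + (k+2)B^{k+1})∂_x B⁰ − B⁰∂_x B^{k+1}`. -/
theorem statement14 (N : ℕ) (hN : 2 ≤ N) (Ω : Set (ℝ × ℝ)) (hΩ : IsOpen Ω)
    (b : Fin N → ℝ × ℝ → ℝ)
    (hb : ∀ k, DifferentiableOn ℝ (b k) Ω)
    (hB : SystemB N Ω b) :
    ∀ z ∈ Ω,
      (pdt (moment N b 0) z =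
        ((N : ℝ) + 2 * moment N b 1 z) * pdx (moment N b 0) z -
          moment N b 0 z * pdx (moment N b 1) z) ∧
      ∀ k : ℕ, 1 ≤ k →
        pdt (moment N b k) z =
          ((k : ℝ) * moment N b (k - 1) z + ((k : ℝ) + 2) * moment N b (k + 1) z) *
              pdx (moment N b 0) z -
            moment N b 0 z * pdx (moment N b (k + 1)) z :=
  statement14_general N Ω hΩ b hb hB
end

section
/- Let N ≥ 2 and let b¹,…,b^N : Ω → ℝ be differentiable functions on an open set Ω ⊆ ℝ² satisfying system (B), with C⁰ := Σ_{m=1}^N b^m nonvanishing on Ω. Define C¹ := (1/2)·Σ_{m=1}^N (b^m)² + N/2. Then the first Kruskal conservation law holds: ∂_t( (C⁰)^{-2} ) = ∂_x( 2C¹·(C⁰)^{-2} ) on Ω. -/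
/-!
Writing `S = C⁰`, summing system (B) over `k` gives
`∂_t S = (N + Σ (b^m)²) ∂_x S - S Σ b^m ∂_x b^m = 2C¹ ∂_x S - S ∂_x C¹`.
Any pair `S ≠ 0`, `C` related in this way yields the conservation law
`∂_t S⁻² = ∂_x (2C S⁻²)`: both sides equal `2 S⁻² ∂_x C - 4 C S⁻³ ∂_x S`.
-/

open ContinuousLinearMap

section
variable {E : Type*} [NormedAddCommGroup E] [NormedSpace ℝ E] {f g : E → ℝ} {z : E}

theorem HasFDerivAt.inv_sq {f' : E →L[ℝ] ℝ} (hf : HasFDerivAt f f' z) (hz : f z ≠ 0) :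
    HasFDerivAt (fun w => (f w ^ 2)⁻¹) ((-2 * (f z ^ 3)⁻¹) • f') z := by
  refine ((hasDerivAt_inv (pow_ne_zero 2 hz)).comp_hasFDerivAt z (hf.pow 2)).congr_fderiv ?_
  ext v
  simp only [Nat.add_one_sub_one, pow_one, nsmul_eq_mul, Nat.cast_ofNat, neg_smul, neg_apply,
    smul_apply, smul_eq_mul, neg_mul, neg_inj]
  field_simp

theorem fderiv_inv_sq_eq_of_fderiv_eq (hf : DifferentiableAt ℝ f z)
    (hg : DifferentiableAt ℝ g z) (hz : f z ≠ 0) {u v : E}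
    (h : fderiv ℝ f z v = 2 * g z * fderiv ℝ f z u - f z * fderiv ℝ g z u) :
    fderiv ℝ (fun w => (f w ^ 2)⁻¹) z v =
      fderiv ℝ (fun w => 2 * g w * (f w ^ 2)⁻¹) z u := by
  have hinv := hf.hasFDerivAt.inv_sq hz
  rw [hinv.fderiv, ((hg.hasFDerivAt.const_mul 2).fun_mul hinv).fderiv]
  simp only [add_apply, smul_apply, smul_eq_mul, h]
  field_simp
  ring

variable {ι : Type*} [Fintype ι] {b : ι → E → ℝ}

theorem fderiv_fun_sum_apply (hb : ∀ m, DifferentiableAt ℝ (b m) z) (v : E) :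
    fderiv ℝ (fun w => ∑ m, b m w) z v = ∑ m, fderiv ℝ (b m) z v := by
  rw [fderiv_fun_sum fun m _ => hb m, sum_apply]

theorem fderiv_half_sum_sq_add_const_apply (hb : ∀ m, DifferentiableAt ℝ (b m) z) (c : ℝ)
    (v : E) :
    fderiv ℝ (fun w => (1 / 2) * ∑ m, b m w ^ 2 + c) z v = ∑ m, b m z * fderiv ℝ (b m) z v := by
  have hsq : ∀ m, HasFDerivAt (fun w => b m w ^ 2) ((2 * b m z) • fderiv ℝ (b m) z) z :=
    fun m => ((hb m).hasFDerivAt.pow 2).congr_fderiv (by simp)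
  rw [(((HasFDerivAt.fun_sum fun m _ => hsq m).const_mul (1 / 2)).add_const c).fderiv]
  simp only [smul_apply, sum_apply, smul_eq_mul, Finset.mul_sum]
  exact Finset.sum_congr rfl fun m _ => by ring

end

theorem SystemB.pdt_sum_eq {N : ℕ} {Ω : Set (ℝ × ℝ)} {b : Fin N → ℝ × ℝ → ℝ}
    (hB : SystemB N Ω b) {z : ℝ × ℝ} (hz : z ∈ Ω) (hb : ∀ m, DifferentiableAt ℝ (b m) z) :
    pdt (fun w => ∑ m, b m w) z =
      2 * ((1 / 2) * ∑ m, b m z ^ 2 + (N : ℝ) / 2) * pdx (fun w => ∑ m, b m w) z -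
        (∑ m, b m z) * pdx (fun w => (1 / 2) * ∑ m, b m w ^ 2 + (N : ℝ) / 2) z := by
  rw [pdt, fderiv_fun_sum_apply hb, pdx, fderiv_fun_sum_apply hb, pdx,
    fderiv_half_sum_sq_add_const_apply hb]
  change ∑ m, pdt (b m) z = 2 * _ * ∑ m, pdx (b m) z - _ * ∑ m, b m z * pdx (b m) z
  rw [Finset.sum_congr rfl fun k _ => hB z hz k, Finset.sum_sub_distrib, ← Finset.sum_mul, Finset.sum_add_distrib]
  simp only [mul_assoc, ← Finset.mul_sum, Finset.sum_const, Finset.card_univ, Fintype.card_fin,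
    nsmul_eq_mul, mul_one]
  ring

theorem statement15_general (N : ℕ) (Ω : Set (ℝ × ℝ)) (hΩ : IsOpen Ω)
    (b : Fin N → ℝ × ℝ → ℝ)
    (hb : ∀ k, DifferentiableOn ℝ (b k) Ω)
    (hB : SystemB N Ω b)
    (C0 C1 : ℝ × ℝ → ℝ)
    (hC0 : ∀ z, C0 z = ∑ m, b m z)
    (hC1 : ∀ z, C1 z = (1 / 2) * ∑ m, (b m z) ^ 2 + (N : ℝ) / 2)
    (hnz : ∀ z ∈ Ω, C0 z ≠ 0) :
    ∀ z ∈ Ω,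
      pdt (fun w => ((C0 w) ^ 2)⁻¹) z = pdx (fun w => 2 * C1 w * ((C0 w) ^ 2)⁻¹) z := by
  intro z hz
  have hbz : ∀ k, DifferentiableAt ℝ (b k) z :=
    fun k => (hb k).differentiableAt (hΩ.mem_nhds hz)
  obtain rfl : C0 = fun w => ∑ m, b m w := funext hC0
  obtain rfl : C1 = fun w => (1 / 2) * ∑ m, b m w ^ 2 + (N : ℝ) / 2 := funext hC1
  exact fderiv_inv_sq_eq_of_fderiv_eq (DifferentiableAt.fun_sum fun m _ => hbz m)
    (by fun_prop) (hnz z hz) (hB.pdt_sum_eq hz hbz)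

/-- for solutions of system (B) with `C⁰ = Σ b^m` nonvanishing and
`C¹ = ½Σ(b^m)² + N/2`, the first Kruskal conservation law holds:
`∂_t((C⁰)^{-2}) = ∂_x(2C¹(C⁰)^{-2})`. -/
theorem statement15 (N : ℕ) (hN : 2 ≤ N) (Ω : Set (ℝ × ℝ)) (hΩ : IsOpen Ω)
    (b : Fin N → ℝ × ℝ → ℝ)
    (hb : ∀ k, DifferentiableOn ℝ (b k) Ω)
    (hB : SystemB N Ω b)
    (C0 C1 : ℝ × ℝ → ℝ)
    (hC0 : ∀ z, C0 z = ∑ m, b m z)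
    (hC1 : ∀ z, C1 z = (1 / 2) * ∑ m, (b m z) ^ 2 + (N : ℝ) / 2)
    (hnz : ∀ z ∈ Ω, C0 z ≠ 0) :
    ∀ z ∈ Ω,
      pdt (fun w => ((C0 w) ^ 2)⁻¹) z = pdx (fun w => 2 * C1 w * ((C0 w) ^ 2)⁻¹) z :=
  statement15_general N Ω hΩ b hb hB C0 C1 hC0 hC1 hnz
end

section
/- Let N ≥ 2 and let b¹,…,b^N : Ω → ℝ be differentiable functions on an open set Ω ⊆ ℝ² satisfying system (B), with C⁰ := Σ_{m=1}^N b^m nonvanishing on Ω. Define C¹ := (1/2)·Σ_{m=1}^N (b^m)² + N/2 and C² := (1/3)·Σ_{m=1}^N (b^m)³. Then the second Kruskal conservation law holds: ∂_t( C¹·(C⁰)^{-4} ) = ∂_x( 2(C¹)²·(C⁰)^{-4} − C²·(C⁰)^{-3} − (1/2)·(C⁰)^{-2} ) on Ω. -/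
/-!
Write `dBʲ = Σₘ (bᵐ)ʲ dbᵐ` for the differential of the moment `Bʲ = Σₘ (bᵐ)ʲ⁺¹ / (j + 1)`.
Summing system (B) against `(bᵏ)ʲ` gives the moment evolution
`∂ₜBʲ = (Σₘ (bᵐ)ʲ + Σₘ (bᵐ)ʲ⁺²) ∂ₓB⁰ − B⁰ ∂ₓBʲ⁺¹`. Since `C⁰ = B⁰`, `C¹ = B¹ + N/2`, `C² = B²`
and `Σₘ (bᵐ)⁰ = N`, the cases `j = 0, 1` express `∂ₜC⁰` and `∂ₜC¹` through `x`-derivatives of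
`C⁰, C¹, C²`. After the quotient rule both sides of the conservation law become the same
rational expression in `C⁰, C¹, C²` and their `x`-derivatives.
-/

theorem HasFDerivAt.fun_div {𝕜 E : Type*} [NontriviallyNormedField 𝕜] [NormedAddCommGroup E]
    [NormedSpace 𝕜 E] {c d : E → 𝕜} {c' d' : E →L[𝕜] 𝕜} {x : E}
    (hc : HasFDerivAt c c' x) (hd : HasFDerivAt d d' x) (hx : d x ≠ 0) :
    HasFDerivAt (fun y => c y / d y) ((d x ^ 2)⁻¹ • (d x • c' - c x • d')) x := by
  simp only [div_eq_mul_inv]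
  refine (hc.mul ((hasFDerivAt_inv hx).comp x hd)).congr_fderiv ?_
  ext v
  simp only [add_apply, smul_apply, sub_apply, smul_eq_mul, Function.comp_apply,
    ContinuousLinearMap.comp_apply, ContinuousLinearMap.toSpanSingleton_apply]
  field_simp
  ring

section

variable {E : Type*} [NormedAddCommGroup E] [NormedSpace ℝ E]

theorem hasFDerivAt_moment_s16 {ι : Type*} [Fintype ι] {b : ι → E → ℝ} {z : E}
    (hb : ∀ m, DifferentiableAt ℝ (b m) z) (n : ℕ) :
    HasFDerivAt (fun w => (n + 1 : ℝ)⁻¹ * ∑ m, b m w ^ (n + 1))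
      (∑ m, b m z ^ n • fderiv ℝ (b m) z) z := by
  refine ((HasFDerivAt.fun_sum fun m _ => (hb m).hasFDerivAt.pow (n + 1)).const_mul
    (n + 1 : ℝ)⁻¹).congr_fderiv ?_
  rw [Finset.smul_sum]
  refine Finset.sum_congr rfl fun m _ => ?_
  rw [smul_smul, nsmul_eq_mul, Nat.add_sub_cancel, Nat.cast_add_one,
    inv_mul_cancel_left₀ (by positivity)]

theorem kruskal_second_law_of_moment_laws {C0 C1 C2 : E → ℝ} {D0 D1 D2 : E →L[ℝ] ℝ} {z : E}
    (h0 : HasFDerivAt C0 D0 z) (h1 : HasFDerivAt C1 D1 z) (h2 : HasFDerivAt C2 D2 z)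
    (hz : C0 z ≠ 0) {t x : E}
    (hT0 : D0 t = 2 * C1 z * D0 x - C0 z * D1 x)
    (hT1 : D1 t = (C0 z + 3 * C2 z) * D0 x - C0 z * D2 x) :
    fderiv ℝ (fun w => C1 w / C0 w ^ 4) z t =
      fderiv ℝ (fun w => 2 * C1 w ^ 2 / C0 w ^ 4 - C2 w / C0 w ^ 3 - 1 / (2 * C0 w ^ 2)) z x := by
  have density := h1.fun_div (h0.pow 4) (pow_ne_zero 4 hz)
  have flux := ((((h1.pow 2).const_mul 2).fun_div (h0.pow 4) (pow_ne_zero 4 hz)).fun_sub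
    (h2.fun_div (h0.pow 3) (pow_ne_zero 3 hz))).fun_sub
    ((hasFDerivAt_const 1 z).fun_div ((h0.pow 2).const_mul 2) (by positivity))
  rw [density.fderiv, flux.fderiv]
  simp only [smul_apply, sub_apply, smul_eq_mul, nsmul_eq_mul, zero_apply, hT0, hT1]
  field_simp
  ring

end

theorem SystemB.moment_evolution {N : ℕ} {Ω : Set (ℝ × ℝ)} {b : Fin N → ℝ × ℝ → ℝ}
    (hB : SystemB N Ω b) {z : ℝ × ℝ} (hz : z ∈ Ω) (j : ℕ) :
    (∑ m, b m z ^ j • fderiv ℝ (b m) z) (0, 1) =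
      (∑ m, b m z ^ j + ∑ m, b m z ^ (j + 2)) * (∑ m, b m z ^ 0 • fderiv ℝ (b m) z) (1, 0) -
        (∑ m, b m z) * (∑ m, b m z ^ (j + 1) • fderiv ℝ (b m) z) (1, 0) := by
  simp only [FunLike.coe_sum, Finset.sum_apply, smul_apply, smul_eq_mul, pow_zero, one_mul]
  change ∑ m, b m z ^ j * pdt (b m) z = _ * ∑ m, pdx (b m) z - _ * ∑ m, _ * pdx (b m) z
  calc ∑ m, b m z ^ j * pdt (b m) z
      = ∑ m, ((b m z ^ j + b m z ^ (j + 2)) * ∑ k, pdx (b k) z -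
          (∑ k, b k z) * (b m z ^ (j + 1) * pdx (b m) z)) :=
        Finset.sum_congr rfl fun m _ => by rw [hB z hz m]; ring
    _ = _ := by
        rw [Finset.sum_sub_distrib, ← Finset.sum_mul, ← Finset.mul_sum, Finset.sum_add_distrib]

theorem statement16_general (N : ℕ) (Ω : Set (ℝ × ℝ)) (hΩ : IsOpen Ω)
    (b : Fin N → ℝ × ℝ → ℝ)
    (hb : ∀ k, DifferentiableOn ℝ (b k) Ω)
    (hB : SystemB N Ω b)
    (C0 C1 C2 : ℝ × ℝ → ℝ)
    (hC0 : ∀ z, C0 z = ∑ m, b m z)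
    (hC1 : ∀ z, C1 z = (1 / 2) * ∑ m, (b m z) ^ 2 + (N : ℝ) / 2)
    (hC2 : ∀ z, C2 z = (1 / 3) * ∑ m, (b m z) ^ 3)
    (hnz : ∀ z ∈ Ω, C0 z ≠ 0) :
    ∀ z ∈ Ω,
      pdt (fun w => C1 w / (C0 w) ^ 4) z =
        pdx (fun w =>
          2 * (C1 w) ^ 2 / (C0 w) ^ 4 - C2 w / (C0 w) ^ 3 -
            1 / (2 * (C0 w) ^ 2)) z := by
  intro z hz
  have hd : ∀ k, DifferentiableAt ℝ (b k) z := fun k => (hb k).differentiableAt (hΩ.mem_nhds hz)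
  have h0 : HasFDerivAt C0 (∑ m, b m z ^ 0 • fderiv ℝ (b m) z) z :=
    (hasFDerivAt_moment_s16 hd 0).congr_of_eventuallyEq (.of_forall fun w => by simp [hC0])
  have h1 : HasFDerivAt C1 (∑ m, b m z ^ 1 • fderiv ℝ (b m) z) z :=
    ((hasFDerivAt_moment_s16 hd 1).add_const ((N : ℝ) / 2)).congr_of_eventuallyEq
      (.of_forall fun w => by rw [hC1]; norm_num)
  have h2 : HasFDerivAt C2 (∑ m, b m z ^ 2 • fderiv ℝ (b m) z) z :=
    (hasFDerivAt_moment_s16 hd 2).congr_of_eventuallyEq (.of_forall fun w => by rw [hC2]; norm_num)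
  refine kruskal_second_law_of_moment_laws h0 h1 h2 (hnz z hz) ?_ ?_
  · rw [hB.moment_evolution hz 0, hC0, hC1]
    simp only [pow_zero, Finset.sum_const, Finset.card_univ, Fintype.card_fin, nsmul_eq_mul,
      mul_one]
    ring
  · rw [hB.moment_evolution hz 1, hC0, hC2]
    simp only [Nat.reduceAdd, pow_one]
    ring

/-- for solutions of system (B) with `C⁰ = Σ b^m` nonvanishing,
`C¹ = ½Σ(b^m)² + N/2`, `C² = ⅓Σ(b^m)³`, the second Kruskal conservation law holds:
`∂_t(C¹(C⁰)^{-4}) = ∂_x(2(C¹)²(C⁰)^{-4} − C²(C⁰)^{-3} − ½(C⁰)^{-2})`. -/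
theorem statement16 (N : ℕ) (hN : 2 ≤ N) (Ω : Set (ℝ × ℝ)) (hΩ : IsOpen Ω)
    (b : Fin N → ℝ × ℝ → ℝ)
    (hb : ∀ k, DifferentiableOn ℝ (b k) Ω)
    (hB : SystemB N Ω b)
    (C0 C1 C2 : ℝ × ℝ → ℝ)
    (hC0 : ∀ z, C0 z = ∑ m, b m z)
    (hC1 : ∀ z, C1 z = (1 / 2) * ∑ m, (b m z) ^ 2 + (N : ℝ) / 2)
    (hC2 : ∀ z, C2 z = (1 / 3) * ∑ m, (b m z) ^ 3)
    (hnz : ∀ z ∈ Ω, C0 z ≠ 0) :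
    ∀ z ∈ Ω,
      pdt (fun w => C1 w / (C0 w) ^ 4) z =
        pdx (fun w =>
          2 * (C1 w) ^ 2 / (C0 w) ^ 4 - C2 w / (C0 w) ^ 3 -
            1 / (2 * (C0 w) ^ 2)) z :=
  statement16_general N Ω hΩ b hb hB C0 C1 C2 hC0 hC1 hC2 hnz
end
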